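/- arXiv:2209.09190 — 9 statements merged into one kernel-verified Lean document; each statement's English description precedes it below -/
import Mathlib

section
/- Let (Θ, 𝒜, μ) be a σ-finite measure space, π₀ : Θ → [0,∞) measurable, and ℓ₁,…,ℓₙ : Θ → [0,∞) measurable. For j = 1,…,n set Z₋ⱼ = ∫_Θ π₀(θ)∏_{k≠j} ℓ_k(θ) μ(dθ) and Z = ∫_Θ π₀(θ)∏_{k=1}^n ℓ_k(θ) μ(dθ), and assume 0 < Z₋ⱼ < ∞ for every j and 0 < Z < ∞. Fix i ∈ {1,…,n}, set μᵢ = Z / Z₋ᵢ, and assume ∫_Θ ℓᵢ(θ) · π₀(θ)∏_{k=1}^n ℓ_k(θ) μ(dθ) < ∞. Let α₁,…,αₙ ∈ (0,∞), Z_α = Σ_{j=1}^n αⱼ Z₋ⱼ, define the weighted mixture density q(θ) = Z_α^{-1} Σ_{j=1}^n αⱼ π₀(θ)∏_{k≠j} ℓ_k(θ) and the i-th leave-one-out posterior density f₋ᵢ(θ) = Z₋ᵢ^{-1} π₀(θ)∏_{k≠i} ℓ_k(θ). Then the asymptotic-variance integral ∫_{{q>0}} (f₋ᵢ(θ)/q(θ))²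 (ℓᵢ(θ)/μᵢ − 1)² q(θ) μ(dθ) is finite. -/
open MeasureTheory Finset
open scoped ENNReal

/-!
Each leave-one-out posterior is one component of the mixture, so `f₋ᵢ ≤ C q` with
`C = Z_α / (αᵢ Z₋ᵢ)`. Hence `(f₋ᵢ / q)² (ℓᵢ/μᵢ - 1)² q ≤ C (ℓᵢ/μᵢ - 1)² f₋ᵢ
≤ 2C ((ℓᵢ/μᵢ)² + 1) f₋ᵢ`, and `ℓᵢ² f₋ᵢ` is a multiple of `ℓᵢ π₀ ∏ₖ ℓₖ`, which is integrable
by assumption, while `f₋ᵢ` is integrable because `Z₋ᵢ < ∞`.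
-/

lemma le_mul_mixture {ι : Type*} [Fintype ι] {α p : ι → ℝ} (hα : ∀ j, 0 ≤ α j)
    (hp : ∀ j, 0 ≤ p j) {i : ι} (hαi : 0 < α i) {c S : ℝ} (hc : 0 < c) (hS : S ≠ 0) :
    c⁻¹ * p i ≤ S / (α i * c) * (S⁻¹ * ∑ j, α j * p j) := by
  have hsingle : α i * p i ≤ ∑ j, α j * p j :=
    single_le_sum (fun j _ => mul_nonneg (hα j) (hp j)) (mem_univ i)
  calc c⁻¹ * p i = α i * p i / (α i * c) := by field_simp
    _ ≤ (∑ j, α j * p j) / (α i * c) := by gcongr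
    _ = S / (α i * c) * (S⁻¹ * ∑ j, α j * p j) := by field_simp

lemma sq_div_mul_mul_le_of_le_mul {f q C g : ℝ} (hf : 0 ≤ f) (hC : 0 ≤ C) (hg : 0 ≤ g)
    (hfq : f ≤ C * q) : (f / q) ^ 2 * g * q ≤ C * (g * f) := by
  rcases le_or_gt q 0 with hq | hq
  · obtain rfl : f = 0 := le_antisymm (hfq.trans (mul_nonpos_of_nonneg_of_nonpos hC hq)) hf
    simp
  · have hdiv : f / q ≤ C := (div_le_iff₀ hq).2 (by linarith)
    calc (f / q) ^ 2 * g * q = f / q * (g * f) := by field_simp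
      _ ≤ C * (g * f) := mul_le_mul_of_nonneg_right hdiv (mul_nonneg hg hf)

section

variable {Θ : Type*} [MeasurableSpace Θ] {μ : Measure Θ}

lemma integrable_of_lintegral_ofReal_lt_top {f : Θ → ℝ} (hfm : Measurable f) (hf : ∀ θ, 0 ≤ f θ)
    (hfin : ∫⁻ θ, ENNReal.ofReal (f θ) ∂μ < ⊤) : Integrable f μ :=
  ⟨hfm.aestronglyMeasurable, (hasFiniteIntegral_iff_ofReal (ae_of_all _ hf)).2 hfin⟩

lemma setLIntegral_ofReal_lt_top_of_le {f B : Θ → ℝ} (hB : Integrable B μ)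
    (hfB : ∀ θ, f θ ≤ B θ) (s : Set Θ) : ∫⁻ θ in s, ENNReal.ofReal (f θ) ∂μ < ⊤ :=
  (setLIntegral_le_lintegral s _).trans_lt
    ((lintegral_mono fun θ => ENNReal.ofReal_le_ofReal (hfB θ)).trans_lt hB.lintegral_lt_top)

lemma setLIntegral_sq_ratio_mul_lt_top_of_le_mul {f q h : Θ → ℝ} {C : ℝ} (m : ℝ)
    (hf : ∀ θ, 0 ≤ f θ) (hC : 0 ≤ C) (hfq : ∀ θ, f θ ≤ C * q θ) (hfi : Integrable f μ)
    (hhfi : Integrable (fun θ => h θ ^ 2 * f θ) μ) (s : Set Θ) :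
    ∫⁻ θ in s, ENNReal.ofReal ((f θ / q θ) ^ 2 * (h θ / m - 1) ^ 2 * q θ) ∂μ < ⊤ := by
  refine setLIntegral_ofReal_lt_top_of_le
    ((hhfi.const_mul (2 * C * (m⁻¹) ^ 2)).add (hfi.const_mul (2 * C))) (fun θ => ?_) s
  calc (f θ / q θ) ^ 2 * (h θ / m - 1) ^ 2 * q θ
      ≤ C * ((h θ / m - 1) ^ 2 * f θ) :=
        sq_div_mul_mul_le_of_le_mul (hf θ) hC (sq_nonneg _) (hfq θ)
    _ ≤ C * ((2 * (h θ / m) ^ 2 + 2) * f θ) := by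
        gcongr
        · exact hf θ
        · nlinarith [sq_nonneg (h θ / m + 1)]
    _ = 2 * C * (m⁻¹) ^ 2 * (h θ ^ 2 * f θ) + 2 * C * f θ := by ring

end

theorem mixture_asymptotic_variance_finite_general
    {Θ : Type*} [MeasurableSpace Θ] (μ : Measure Θ)
    (n : ℕ) (π₀ : Θ → ℝ) (ℓ : Fin n → Θ → ℝ)
    (hπ₀m : Measurable π₀) (hπ₀ : ∀ θ, 0 ≤ π₀ θ)
    (hℓm : ∀ k, Measurable (ℓ k)) (hℓ : ∀ k θ, 0 ≤ ℓ k θ)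
    (Zm : Fin n → ℝ≥0∞)
    (hZm : ∀ j, Zm j = ∫⁻ θ, ENNReal.ofReal (π₀ θ * ∏ k ∈ Finset.univ.erase j, ℓ k θ) ∂μ)
    (hZmpos : ∀ j, 0 < Zm j) (hZmfin : ∀ j, Zm j < ⊤)
    (i : Fin n) (μi : ℝ)
    (hint : (∫⁻ θ, ENNReal.ofReal (ℓ i θ * (π₀ θ * ∏ k, ℓ k θ)) ∂μ) < ⊤)
    (α : Fin n → ℝ) (hα : ∀ j, 0 < α j)
    (Zα : ℝ) (hZα : Zα = ∑ j, α j * (Zm j).toReal)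
    (q : Θ → ℝ)
    (hq : ∀ θ, q θ = Zα⁻¹ * ∑ j, α j * (π₀ θ * ∏ k ∈ Finset.univ.erase j, ℓ k θ))
    (fmi : Θ → ℝ)
    (hfmi : ∀ θ, fmi θ = ((Zm i).toReal)⁻¹ * (π₀ θ * ∏ k ∈ Finset.univ.erase i, ℓ k θ)) :
    (∫⁻ θ in {θ | 0 < q θ},
      ENNReal.ofReal ((fmi θ / q θ) ^ 2 * (ℓ i θ / μi - 1) ^ 2 * q θ) ∂μ) < ⊤ := by
  have hZmi : 0 < (Zm i).toReal := ENNReal.toReal_pos (hZmpos i).ne' (hZmfin i).ne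
  have hZαpos : 0 < Zα := hZα ▸ sum_pos (fun j _ =>
    mul_pos (hα j) (ENNReal.toReal_pos (hZmpos j).ne' (hZmfin j).ne)) ⟨i, mem_univ i⟩
  set C := Zα / (α i * (Zm i).toReal)
  have hC : 0 ≤ C := div_nonneg hZαpos.le (mul_pos (hα i) hZmi).le
  have hp : ∀ (s : Finset (Fin n)) θ, 0 ≤ π₀ θ * ∏ k ∈ s, ℓ k θ := fun s θ =>
    mul_nonneg (hπ₀ θ) (prod_nonneg fun k _ => hℓ k θ)
  have hpm : ∀ s : Finset (Fin n), Measurable fun θ => π₀ θ * ∏ k ∈ s, ℓ k θ := fun s =>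
    hπ₀m.mul (Finset.measurable_prod _ fun k _ => hℓm k)
  have hfmi_nonneg : ∀ θ, 0 ≤ fmi θ := fun θ => by
    rw [hfmi]; exact mul_nonneg (inv_nonneg.2 hZmi.le) (hp _ θ)
  have hfmi_le : ∀ θ, fmi θ ≤ C * q θ := fun θ => by
    rw [hfmi, hq]
    exact le_mul_mixture (fun j => (hα j).le) (fun j => hp _ θ) (hα i) hZmi hZαpos.ne'
  have hfmi_int : Integrable fmi μ := by
    rw [funext hfmi]
    exact (integrable_of_lintegral_ofReal_lt_top (hpm _) (hp _) (hZm i ▸ hZmfin i)).const_mul _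
  have hsq_fmi_int : Integrable (fun θ => (ℓ i θ) ^ 2 * fmi θ) μ := by
    have hg : Integrable (fun θ => ℓ i θ * (π₀ θ * ∏ k, ℓ k θ)) μ :=
      integrable_of_lintegral_ofReal_lt_top ((hℓm i).mul (hpm univ))
        (fun θ => mul_nonneg (hℓ i θ) (hp univ θ)) hint
    refine (hg.const_mul ((Zm i).toReal)⁻¹).congr (ae_of_all _ fun θ => ?_)
    simp only [hfmi, ← mul_prod_erase univ (fun k => ℓ k θ) (mem_univ i)]
    ring
  exact setLIntegral_sq_ratio_mul_lt_top_of_le_mul μi hfmi_nonneg hC hfmi_le hfmi_int hsq_fmi_int _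

/-- **Theorem 1 (weighted form).** Finite asymptotic variance of the mixture
importance-sampling estimator of the leave-one-out predictive density. -/
theorem mixture_asymptotic_variance_finite
    {Θ : Type*} [MeasurableSpace Θ] (μ : Measure Θ) [SigmaFinite μ]
    (n : ℕ) (π₀ : Θ → ℝ) (ℓ : Fin n → Θ → ℝ)
    (hπ₀m : Measurable π₀) (hπ₀ : ∀ θ, 0 ≤ π₀ θ)
    (hℓm : ∀ k, Measurable (ℓ k)) (hℓ : ∀ k θ, 0 ≤ ℓ k θ)
    (Zm : Fin n → ℝ≥0∞)
    (hZm : ∀ j, Zm j = ∫⁻ θ, ENNReal.ofReal (π₀ θ * ∏ k ∈ Finset.univ.erase j, ℓ k θ) ∂μ)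
    (Z : ℝ≥0∞) (hZ : Z = ∫⁻ θ, ENNReal.ofReal (π₀ θ * ∏ k, ℓ k θ) ∂μ)
    (hZmpos : ∀ j, 0 < Zm j) (hZmfin : ∀ j, Zm j < ⊤)
    (hZpos : 0 < Z) (hZfin : Z < ⊤)
    (i : Fin n) (μi : ℝ) (hμi : μi = Z.toReal / (Zm i).toReal)
    (hint : (∫⁻ θ, ENNReal.ofReal (ℓ i θ * (π₀ θ * ∏ k, ℓ k θ)) ∂μ) < ⊤)
    (α : Fin n → ℝ) (hα : ∀ j, 0 < α j)
    (Zα : ℝ) (hZα : Zα = ∑ j, α j * (Zm j).toReal)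
    (q : Θ → ℝ)
    (hq : ∀ θ, q θ = Zα⁻¹ * ∑ j, α j * (π₀ θ * ∏ k ∈ Finset.univ.erase j, ℓ k θ))
    (fmi : Θ → ℝ)
    (hfmi : ∀ θ, fmi θ = ((Zm i).toReal)⁻¹ * (π₀ θ * ∏ k ∈ Finset.univ.erase i, ℓ k θ)) :
    (∫⁻ θ in {θ | 0 < q θ},
      ENNReal.ofReal ((fmi θ / q θ) ^ 2 * (ℓ i θ / μi - 1) ^ 2 * q θ) ∂μ) < ⊤ :=
  mixture_asymptotic_variance_finite_general μ n π₀ ℓ hπ₀m hπ₀ hℓm hℓ Zm hZm hZmpos hZmfin i μi hint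
    α hα Zα hZα q hq fmi hfmi
end

section
/- Let (Θ, 𝒜, μ) be a σ-finite measure space, π₀ : Θ → [0,∞) measurable, and ℓ₁,…,ℓₙ : Θ → [0,∞) measurable. For j = 1,…,n set Z₋ⱼ = ∫_Θ π₀∏_{k≠j} ℓ_k dμ and Z = ∫_Θ π₀∏_{k=1}^n ℓ_k dμ, and assume 0 < Z₋ⱼ < ∞ for every j and 0 < Z < ∞. Fix i ∈ {1,…,n} and set μᵢ = Z / Z₋ᵢ. Let α₁,…,αₙ ∈ (0,∞), Z_α = Σⱼ αⱼ Z₋ⱼ, πⱼ = αⱼ Z₋ⱼ / Z_α, and define q(θ) = Z_α^{-1} Σⱼ αⱼ π₀(θ)∏_{k≠j} ℓ_k(θ), the leave-one-out posterior density f₋ᵢ(θ) = Z₋ᵢ^{-1} π₀(θ)∏_{k≠i} ℓ_k(θ), and the full posterior density f(θ) = Z^{-1} π₀(θ)∏_{k=1}^n ℓ_k(θ). Then ∫_{{q>0}} (f₋ᵢ/q)² (ℓᵢ/μᵢ − 1)² q dμ ≤ πᵢ^{-1} ( 1 + μᵢ^{-1} ∫_Θ ℓᵢ(θ) f(θ)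 μ(dθ) ). -/
/-!
Each component of the mixture dominates its own share: `πᵢ f₋ᵢ ≤ q`. Hence on `{q > 0}` the
importance weight satisfies `f₋ᵢ / q ≤ πᵢ⁻¹`, so the integrand is at most
`πᵢ⁻¹ f₋ᵢ (ℓᵢ/μᵢ - 1)² ≤ πᵢ⁻¹ f₋ᵢ ((ℓᵢ/μᵢ)² + 1)`. Finally `∫ f₋ᵢ = 1` and
`f₋ᵢ (ℓᵢ/μᵢ)² = μᵢ⁻¹ ℓᵢ f`, since `ℓᵢ f₋ᵢ / μᵢ = f`.
-/

open MeasureTheory Finset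
open scoped ENNReal

theorem sq_div_mul_mul_le {g h q c : ℝ} (hg : 0 ≤ g) (hh : 0 ≤ h) (hc : 0 < c)
    (hgq : c * g ≤ q) : (g / q) ^ 2 * h * q ≤ c⁻¹ * (g * h) := by
  rcases (mul_nonneg hc.le hg).trans hgq |>.eq_or_lt with rfl | hq
  · simp only [div_zero, mul_zero]
    positivity
  have hweight : g / q ≤ c⁻¹ := by
    rw [div_le_iff₀ hq, inv_mul_eq_div, le_div_iff₀ hc, mul_comm]
    exact hgq
  calc (g / q) ^ 2 * h * q = g / q * (g * h) := by field_simp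
    _ ≤ c⁻¹ * (g * h) := by gcongr

theorem sub_one_sq_le_sq_add_one {y : ℝ} (hy : 0 ≤ y) : (y - 1) ^ 2 ≤ y ^ 2 + 1 := by
  nlinarith

theorem weight_mul_component_le_mixture {ι : Type*} [Fintype ι] (α Z G : ι → ℝ)
    (hα : ∀ j, 0 ≤ α j) (hZ : ∀ j, 0 ≤ Z j) (hG : ∀ j, 0 ≤ G j) {i : ι} (hZi : Z i ≠ 0) :
    α i * Z i / (∑ j, α j * Z j) * ((Z i)⁻¹ * G i)
      ≤ (∑ j, α j * Z j)⁻¹ * ∑ j, α j * G j := by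
  have hS : 0 ≤ ∑ j, α j * Z j := sum_nonneg fun j _ => mul_nonneg (hα j) (hZ j)
  calc α i * Z i / (∑ j, α j * Z j) * ((Z i)⁻¹ * G i)
      = (∑ j, α j * Z j)⁻¹ * (α i * G i) := by field_simp
    _ ≤ (∑ j, α j * Z j)⁻¹ * ∑ j, α j * G j := by
      gcongr
      exact single_le_sum (f := fun j => α j * G j) (fun j _ => mul_nonneg (hα j) (hG j))
        (mem_univ i)

section Lintegral

variable {Θ : Type*} [MeasurableSpace Θ] (μ : Measure Θ)

theorem lintegral_ofReal_inv_toReal_mul_eq_one (G : Θ → ℝ)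
    (h0 : ∫⁻ θ, ENNReal.ofReal (G θ) ∂μ ≠ 0) (htop : ∫⁻ θ, ENNReal.ofReal (G θ) ∂μ ≠ ⊤) :
    ∫⁻ θ, ENNReal.ofReal ((∫⁻ θ, ENNReal.ofReal (G θ) ∂μ).toReal⁻¹ * G θ) ∂μ = 1 := by
  have hpos : 0 < (∫⁻ θ, ENNReal.ofReal (G θ) ∂μ).toReal := ENNReal.toReal_pos h0 htop
  simp_rw [ENNReal.ofReal_mul (inv_nonneg.2 hpos.le)]
  rw [lintegral_const_mul' _ _ ENNReal.ofReal_ne_top, ENNReal.ofReal_inv_of_pos hpos,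
    ENNReal.ofReal_toReal htop]
  exact ENNReal.inv_mul_cancel h0 htop

theorem setLIntegral_ofReal_sq_div_mul_mul_le (s : Set Θ) {g h q : Θ → ℝ} {c : ℝ}
    (hg : ∀ θ, 0 ≤ g θ) (hh : ∀ θ, 0 ≤ h θ) (hc : 0 < c) (hgq : ∀ θ, c * g θ ≤ q θ) :
    ∫⁻ θ in s, ENNReal.ofReal ((g θ / q θ) ^ 2 * h θ * q θ) ∂μ
      ≤ ENNReal.ofReal c⁻¹ * ∫⁻ θ, ENNReal.ofReal (g θ * h θ) ∂μ :=
  calc ∫⁻ θ in s, ENNReal.ofReal ((g θ / q θ) ^ 2 * h θ * q θ) ∂μ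
      ≤ ∫⁻ θ, ENNReal.ofReal ((g θ / q θ) ^ 2 * h θ * q θ) ∂μ := setLIntegral_le_lintegral _ _
    _ ≤ ∫⁻ θ, ENNReal.ofReal c⁻¹ * ENNReal.ofReal (g θ * h θ) ∂μ := by
        refine lintegral_mono fun θ => ?_
        rw [← ENNReal.ofReal_mul (inv_nonneg.2 hc.le)]
        exact ENNReal.ofReal_le_ofReal (sq_div_mul_mul_le (hg θ) (hh θ) hc (hgq θ))
    _ = ENNReal.ofReal c⁻¹ * ∫⁻ θ, ENNReal.ofReal (g θ * h θ) ∂μ :=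
      lintegral_const_mul' _ _ ENNReal.ofReal_ne_top

theorem lintegral_ofReal_mul_sub_one_sq_le {g y : Θ → ℝ} (hgm : Measurable g)
    (hg : ∀ θ, 0 ≤ g θ) (hy : ∀ θ, 0 ≤ y θ) :
    ∫⁻ θ, ENNReal.ofReal (g θ * (y θ - 1) ^ 2) ∂μ
      ≤ ∫⁻ θ, ENNReal.ofReal (g θ * y θ ^ 2) ∂μ + ∫⁻ θ, ENNReal.ofReal (g θ) ∂μ :=
  calc ∫⁻ θ, ENNReal.ofReal (g θ * (y θ - 1) ^ 2) ∂μ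
      ≤ ∫⁻ θ, ENNReal.ofReal (g θ * y θ ^ 2) + ENNReal.ofReal (g θ) ∂μ := by
        refine lintegral_mono fun θ => ?_
        rw [← ENNReal.ofReal_add (mul_nonneg (hg θ) (sq_nonneg _)) (hg θ)]
        refine ENNReal.ofReal_le_ofReal ?_
        have := mul_le_mul_of_nonneg_left (sub_one_sq_le_sq_add_one (hy θ)) (hg θ)
        linarith
    _ = ∫⁻ θ, ENNReal.ofReal (g θ * y θ ^ 2) ∂μ + ∫⁻ θ, ENNReal.ofReal (g θ) ∂μ :=
      lintegral_add_right _ hgm.ennreal_ofReal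

end Lintegral

theorem mixture_asymptotic_variance_bound_general
    {Θ : Type*} [MeasurableSpace Θ] (μ : Measure Θ)
    (n : ℕ) (π₀ : Θ → ℝ) (ℓ : Fin n → Θ → ℝ)
    (hπ₀m : Measurable π₀) (hπ₀ : ∀ θ, 0 ≤ π₀ θ)
    (hℓm : ∀ k, Measurable (ℓ k)) (hℓ : ∀ k θ, 0 ≤ ℓ k θ)
    (Zm : Fin n → ℝ≥0∞)
    (hZm : ∀ j, Zm j = ∫⁻ θ, ENNReal.ofReal (π₀ θ * ∏ k ∈ Finset.univ.erase j, ℓ k θ) ∂μ)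
    (Z : ℝ≥0∞)
    (hZmpos : ∀ j, 0 < Zm j) (hZmfin : ∀ j, Zm j < ⊤)
    (i : Fin n) (μi : ℝ) (hμi : μi = Z.toReal / (Zm i).toReal)
    (α : Fin n → ℝ) (hα : ∀ j, 0 < α j)
    (Zα : ℝ) (hZα : Zα = ∑ j, α j * (Zm j).toReal)
    (πw : Fin n → ℝ) (hπw : ∀ j, πw j = α j * (Zm j).toReal / Zα)
    (q : Θ → ℝ)
    (hq : ∀ θ, q θ = Zα⁻¹ * ∑ j, α j * (π₀ θ * ∏ k ∈ Finset.univ.erase j, ℓ k θ))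
    (fmi : Θ → ℝ)
    (hfmi : ∀ θ, fmi θ = ((Zm i).toReal)⁻¹ * (π₀ θ * ∏ k ∈ Finset.univ.erase i, ℓ k θ))
    (f : Θ → ℝ)
    (hf : ∀ θ, f θ = (Z.toReal)⁻¹ * (π₀ θ * ∏ k, ℓ k θ)) :
    (∫⁻ θ in {θ | 0 < q θ},
      ENNReal.ofReal ((fmi θ / q θ) ^ 2 * (ℓ i θ / μi - 1) ^ 2 * q θ) ∂μ)
      ≤ ENNReal.ofReal ((πw i)⁻¹) *
        (1 + ENNReal.ofReal (μi⁻¹) * ∫⁻ θ, ENNReal.ofReal (ℓ i θ * f θ) ∂μ) := by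
  have hG : ∀ j θ, 0 ≤ π₀ θ * ∏ k ∈ univ.erase j, ℓ k θ := fun j θ =>
    mul_nonneg (hπ₀ θ) (prod_nonneg fun k _ => hℓ k θ)
  have hZmi : 0 < (Zm i).toReal := ENNReal.toReal_pos (hZmpos i).ne' (hZmfin i).ne
  have hπwi : 0 < πw i := by
    rw [hπw, hZα]
    exact div_pos (mul_pos (hα i) hZmi) <| sum_pos'
      (fun j _ => mul_nonneg (hα j).le ENNReal.toReal_nonneg) ⟨i, mem_univ i, mul_pos (hα i) hZmi⟩
  have hfmi_nonneg : ∀ θ, 0 ≤ fmi θ := fun θ => by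
    rw [hfmi]
    exact mul_nonneg (inv_nonneg.2 hZmi.le) (hG i θ)
  have hfmim : Measurable fmi := by
    rw [funext hfmi]
    fun_prop
  have hdom : ∀ θ, πw i * fmi θ ≤ q θ := fun θ => by
    rw [hπw, hfmi, hq, hZα]
    exact weight_mul_component_le_mixture α (fun j => (Zm j).toReal) _
      (fun j => (hα j).le) (fun _ => ENNReal.toReal_nonneg) (fun j => hG j θ) hZmi.ne'
  have hfmi_one : ∫⁻ θ, ENNReal.ofReal (fmi θ) ∂μ = 1 := by
    simp_rw [hfmi, hZm i]
    exact lintegral_ofReal_inv_toReal_mul_eq_one μ _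
      (hZm i ▸ (hZmpos i).ne') (hZm i ▸ (hZmfin i).ne)
  have hratio : ∀ θ, fmi θ * (ℓ i θ / μi) ^ 2 = μi⁻¹ * (ℓ i θ * f θ) := fun θ => by
    rw [hfmi, hf, hμi, ← mul_prod_erase univ (fun k => ℓ k θ) (mem_univ i)]
    rcases eq_or_ne Z.toReal 0 with hZ | hZ
    · simp [hZ]
    field_simp
  have hμi_nonneg : 0 ≤ μi⁻¹ := by
    rw [hμi]
    positivity
  calc _ ≤ ENNReal.ofReal (πw i)⁻¹ * ∫⁻ θ, ENNReal.ofReal (fmi θ * (ℓ i θ / μi - 1) ^ 2) ∂μ :=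
        setLIntegral_ofReal_sq_div_mul_mul_le μ _ hfmi_nonneg (fun _ => sq_nonneg _) hπwi hdom
    _ ≤ ENNReal.ofReal (πw i)⁻¹ * (∫⁻ θ, ENNReal.ofReal (fmi θ * (ℓ i θ / μi) ^ 2) ∂μ
          + ∫⁻ θ, ENNReal.ofReal (fmi θ) ∂μ) := by
        gcongr
        exact lintegral_ofReal_mul_sub_one_sq_le μ hfmim hfmi_nonneg
          (fun θ => div_nonneg (hℓ i θ) (inv_nonneg.1 hμi_nonneg))
    _ = _ := by
        simp_rw [hratio, ENNReal.ofReal_mul hμi_nonneg]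
        rw [lintegral_const_mul' _ _ ENNReal.ofReal_ne_top, hfmi_one, add_comm]

/-- **Equation (12).** Explicit bound on the relative asymptotic variance of the
mixture importance-sampling estimator of the leave-one-out predictive density. -/
theorem mixture_asymptotic_variance_bound
    {Θ : Type*} [MeasurableSpace Θ] (μ : Measure Θ) [SigmaFinite μ]
    (n : ℕ) (π₀ : Θ → ℝ) (ℓ : Fin n → Θ → ℝ)
    (hπ₀m : Measurable π₀) (hπ₀ : ∀ θ, 0 ≤ π₀ θ)
    (hℓm : ∀ k, Measurable (ℓ k)) (hℓ : ∀ k θ, 0 ≤ ℓ k θ)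
    (Zm : Fin n → ℝ≥0∞)
    (hZm : ∀ j, Zm j = ∫⁻ θ, ENNReal.ofReal (π₀ θ * ∏ k ∈ Finset.univ.erase j, ℓ k θ) ∂μ)
    (Z : ℝ≥0∞) (hZ : Z = ∫⁻ θ, ENNReal.ofReal (π₀ θ * ∏ k, ℓ k θ) ∂μ)
    (hZmpos : ∀ j, 0 < Zm j) (hZmfin : ∀ j, Zm j < ⊤)
    (hZpos : 0 < Z) (hZfin : Z < ⊤)
    (i : Fin n) (μi : ℝ) (hμi : μi = Z.toReal / (Zm i).toReal)
    (α : Fin n → ℝ) (hα : ∀ j, 0 < α j)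
    (Zα : ℝ) (hZα : Zα = ∑ j, α j * (Zm j).toReal)
    (πw : Fin n → ℝ) (hπw : ∀ j, πw j = α j * (Zm j).toReal / Zα)
    (q : Θ → ℝ)
    (hq : ∀ θ, q θ = Zα⁻¹ * ∑ j, α j * (π₀ θ * ∏ k ∈ Finset.univ.erase j, ℓ k θ))
    (fmi : Θ → ℝ)
    (hfmi : ∀ θ, fmi θ = ((Zm i).toReal)⁻¹ * (π₀ θ * ∏ k ∈ Finset.univ.erase i, ℓ k θ))
    (f : Θ → ℝ)
    (hf : ∀ θ, f θ = (Z.toReal)⁻¹ * (π₀ θ * ∏ k, ℓ k θ)) :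
    (∫⁻ θ in {θ | 0 < q θ},
      ENNReal.ofReal ((fmi θ / q θ) ^ 2 * (ℓ i θ / μi - 1) ^ 2 * q θ) ∂μ)
      ≤ ENNReal.ofReal ((πw i)⁻¹) *
        (1 + ENNReal.ofReal (μi⁻¹) * ∫⁻ θ, ENNReal.ofReal (ℓ i θ * f θ) ∂μ) :=
  mixture_asymptotic_variance_bound_general μ n π₀ ℓ hπ₀m hπ₀ hℓm hℓ Zm hZm Z hZmpos hZmfin i μi hμi
    α hα Zα hZα πw hπw q hq fmi hfmi f hf
end

section
/- Let X be an n×p real matrix with rows x₁ᵀ,…,xₙᵀ, let Σ be a symmetric positive definite p×p real matrix, let σ > 0, and let H = X(XᵀX + σ²Σ^{-1})^{-1}Xᵀ be the Bayesian hat matrix. Fix i ∈ {1,…,n} and h ∈ (0,1), and set M = XᵀX − h^{-1} xᵢ xᵢᵀ + σ²Σ^{-1}. Then M is positive definite if and only if Hᵢᵢ < h. -/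
/-!
With `A = XᵀX + σ²Σ⁻¹` positive definite and `v = xᵢ`, we have `M = A - h⁻¹ v vᵀ` and
`Hᵢᵢ = vᵀA⁻¹v`. The form `yᵀMy = yᵀAy - h⁻¹ (vᵀy)²` is controlled by Cauchy–Schwarz for the
inner product given by `A`: `(vᵀy)² ≤ (vᵀA⁻¹v)(yᵀAy)`, with equality at `y = A⁻¹v`. Hence `M` is
positive definite exactly when `h⁻¹ vᵀA⁻¹v < 1`.
-/

open Matrix

namespace Matrix

lemma mul_mul_transpose_apply {l m n α : Type*} [Fintype n] [CommSemiring α]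
    (X : Matrix l n α) (B : Matrix n n α) (Y : Matrix m n α) (i : l) (j : m) :
    (X * B * Yᵀ) i j = X i ⬝ᵥ B *ᵥ Y j := by
  rw [Matrix.mul_assoc]
  simp [mul_apply, dotProduct, mulVec]

lemma dotProduct_sub_smul_vecMulVec_mulVec {ι R : Type*} [Fintype ι] [CommRing R]
    (A : Matrix ι ι R) (c : R) (v y : ι → R) :
    y ⬝ᵥ (A - c • vecMulVec v v) *ᵥ y = y ⬝ᵥ A *ᵥ y - c * (v ⬝ᵥ y) ^ 2 := by
  rw [sub_mulVec, smul_mulVec, vecMulVec_mulVec, dotProduct_sub, dotProduct_smul,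
    op_smul_eq_smul, dotProduct_smul, smul_eq_mul, smul_eq_mul, dotProduct_comm y v]
  ring

variable {ι : Type*} [Fintype ι] [DecidableEq ι] {A : Matrix ι ι ℝ}

/-- Cauchy–Schwarz for the form of `A⁻¹`, applied to `v` and `A y`. -/
lemma PosDef.sq_dotProduct_le (hA : A.PosDef) (v y : ι → ℝ) :
    (v ⬝ᵥ y) ^ 2 ≤ (v ⬝ᵥ A⁻¹ *ᵥ v) * (y ⬝ᵥ A *ᵥ y) := by
  have hAinv := hA.inv
  have cs := LinearMap.BilinForm.apply_sq_le_of_symm (toBilin' A⁻¹)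
    (fun x => by simpa [toBilin'_apply'] using hAinv.posSemidef.dotProduct_mulVec_nonneg x)
    (LinearMap.BilinForm.isSymm_iff.mp <| isSymm_toBilin'_iff_isSymm.mpr
      (isHermitian_iff_isSymm.mp hAinv.isHermitian)) v (A *ᵥ y)
  simpa [toBilin'_apply', mulVec_mulVec, nonsing_inv_mul _ ((isUnit_iff_isUnit_det A).mp hA.isUnit),
    dotProduct_comm (A *ᵥ y)] using cs

theorem PosDef.posDef_sub_smul_vecMulVec_iff (hA : A.PosDef) (v : ι → ℝ) (c : ℝ) :
    (A - c • vecMulVec v v).PosDef ↔ c * (v ⬝ᵥ A⁻¹ *ᵥ v) < 1 := by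
  have hdet : IsUnit A.det := (isUnit_iff_isUnit_det A).mp hA.isUnit
  constructor
  · intro hM
    rcases eq_or_ne v 0 with rfl | hv
    · simp
    have hz : A⁻¹ *ᵥ v ≠ 0 := fun hz => hv <| by
      rw [← one_mulVec v, ← mul_nonsing_inv A hdet, ← mulVec_mulVec, hz, mulVec_zero]
    have hq : 0 < v ⬝ᵥ A⁻¹ *ᵥ v := by simpa using hA.inv.dotProduct_mulVec_pos hv
    have hpos := hM.dotProduct_mulVec_pos hz
    rw [star_trivial, dotProduct_sub_smul_vecMulVec_mulVec, mulVec_mulVec, mul_nonsing_inv A hdet,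
      one_mulVec, dotProduct_comm] at hpos
    nlinarith
  · intro hlt
    refine PosDef.of_dotProduct_mulVec_pos
      (hA.isHermitian.sub ((posSemidef_vecMulVec_self_star v).isHermitian.smul
        (IsSelfAdjoint.all c))) fun y hy => ?_
    rw [star_trivial, dotProduct_sub_smul_vecMulVec_mulVec]
    have hy' : 0 < y ⬝ᵥ A *ᵥ y := by simpa using hA.dotProduct_mulVec_pos hy
    have hcs := hA.sq_dotProduct_le v y
    rcases le_or_gt c 0 with hc | hc
    · nlinarith
    · nlinarith [mul_le_mul_of_nonneg_left hcs hc.le]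

end Matrix

/-- **Lemma 2 (hii_bayes).** `M = XᵀX − h⁻¹xᵢxᵢᵀ + σ²Σ⁻¹` is positive definite
if and only if the Bayesian leverage `Hᵢᵢ` is strictly less than `h`. -/
theorem posDef_iff_bayesian_leverage_lt
    (n p : ℕ) (X : Matrix (Fin n) (Fin p) ℝ)
    (S : Matrix (Fin p) (Fin p) ℝ) (hS : S.PosDef)
    (σ : ℝ) (hσ : 0 < σ)
    (H : Matrix (Fin n) (Fin n) ℝ)
    (hH : H = X * (Xᵀ * X + σ ^ 2 • S⁻¹)⁻¹ * Xᵀ)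
    (i : Fin n) (h : ℝ) (hh : h ∈ Set.Ioo (0 : ℝ) 1)
    (M : Matrix (Fin p) (Fin p) ℝ)
    (hM : M = Xᵀ * X - h⁻¹ • vecMulVec (X i) (X i) + σ ^ 2 • S⁻¹) :
    M.PosDef ↔ H i i < h := by
  have hA : (Xᵀ * X + σ ^ 2 • S⁻¹).PosDef := by
    refine PosDef.posSemidef_add ?_ (hS.inv.smul (by positivity))
    simpa using posSemidef_conjTranspose_mul_self X
  rw [hM, sub_add_eq_add_sub, hA.posDef_sub_smul_vecMulVec_iff, hH, mul_mul_transpose_apply,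
    inv_mul_lt_iff₀ hh.1, mul_one]
end

section
/- Let X be an n×p real matrix with rows x₁ᵀ,…,xₙᵀ, y ∈ ℝⁿ, θ₀ ∈ ℝᵖ, σ > 0, and Σ a symmetric positive definite p×p real matrix. Let H = X(XᵀX + σ²Σ^{-1})^{-1}Xᵀ be the Bayesian hat matrix. Then, for each i ∈ {1,…,n}, the integral ∫_{ℝᵖ} exp{ (yᵢ − xᵢᵀθ)²/σ² − (y − Xθ)ᵀ(y − Xθ)/(2σ²) − (θ − θ₀)ᵀΣ^{-1}(θ − θ₀)/2 } dθ (with respect to Lebesgue measure on ℝᵖ) is finite if and only if Hᵢᵢ < 1/2. -/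
open MeasureTheory Matrix Real

/-!
Expanding the squares, the exponent is `-θᵀMθ + bᵀθ + c` with `M = (2σ²)⁻¹ (A - 2 xᵢxᵢᵀ)` and
`A = XᵀX + σ²Σ⁻¹`. Such an integral is finite iff `M` is positive definite: in an orthonormal
eigenbasis of `M` the integrand is a product of one-dimensional functions `exp (-d t² + β t)`, each
integrable iff `d > 0`. By Cauchy–Schwarz for the inner product defined by `A`, with equality at
`A⁻¹xᵢ`, the matrix `A - 2 xᵢxᵢᵀ` is positive definite iff `2 xᵢᵀA⁻¹xᵢ < 1`, and `xᵢᵀA⁻¹xᵢ = Hᵢᵢ`.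
-/

theorem integrable_exp_neg_mul_sq_add_mul_iff {a : ℝ} (b : ℝ) :
    Integrable (fun t : ℝ => exp (-a * t ^ 2 + b * t)) ↔ 0 < a := by
  refine ⟨fun h => ?_, fun ha => ?_⟩
  · -- `cosh ≥ 1` bounds the even Gaussian by the average of `f t` and `f (-t)`
    refine integrable_exp_neg_mul_sq_iff.1 <| ((h.add h.comp_neg).div_const 2).mono'
      (by fun_prop) (Filter.Eventually.of_forall fun t => ?_)
    have hcosh := one_le_cosh (b * t)
    rw [cosh_eq] at hcosh
    simp only [Real.norm_of_nonneg (exp_pos _).le, Pi.add_apply, neg_mul, mul_neg, neg_sq,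
      exp_add] at hcosh ⊢
    nlinarith [exp_pos (-(a * t ^ 2))]
  · refine (((integrable_exp_neg_mul_sq ha).comp_sub_right (b / (2 * a))).const_mul
      (exp (b ^ 2 / (4 * a)))).congr (Filter.Eventually.of_forall fun t => ?_)
    simp only [← exp_add]
    congr 1
    field_simp
    ring

theorem integrable_fin_prod_iff_of_ne_zero {n : ℕ} {f : Fin n → ℝ → ℝ} (hf : ∀ j t, f j t ≠ 0) :
    Integrable (fun u : Fin n → ℝ => ∏ j, f j (u j)) ↔ ∀ j, Integrable (f j) := by
  refine ⟨fun h k => ?_, Integrable.fintype_prod⟩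
  cases n with
  | zero => exact k.elim0
  | succ m =>
    have hsplit := (volume_preserving_piFinSuccAbove (fun _ : Fin (m + 1) => ℝ) k).symm
    rw [← hsplit.integrable_comp_emb (MeasurableEquiv.measurableEmbedding _)] at h
    obtain ⟨w, hw⟩ := h.prod_left_ae.exists
    have hslice : Integrable (fun t => f k t * ∏ i, f (k.succAbove i) (w i)) := by
      simpa [Fin.prod_univ_succAbove _ k] using hw
    exact (integrable_mul_const_iff
      (IsUnit.mk0 _ (Finset.prod_ne_zero_iff.2 fun i _ => hf _ _)) _).1 hslice

theorem Matrix.measurePreserving_mulVec_of_mem_orthogonalGroup {ι : Type*} [Fintype ι]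
    [DecidableEq ι] {U : Matrix ι ι ℝ} (hU : U ∈ orthogonalGroup ι ℝ) :
    MeasurePreserving (U *ᵥ ·) volume volume := by
  have hdet : |U.det| = 1 := by
    simpa only [Real.norm_eq_abs] using CStarRing.norm_of_mem_unitary (det_of_mem_unitary hU)
  have hmap := Real.map_matrix_volume_pi_eq_smul_volume_pi (abs_pos.1 (hdet ▸ one_pos))
  rw [abs_inv, hdet, inv_one, ENNReal.ofReal_one, one_smul, toLin'_apply'] at hmap
  have hmeas : Measurable (U *ᵥ ·) := measurable_pi_lambda _ fun _ =>
    Finset.measurable_sum _ fun k _ => (measurable_pi_apply k).const_mul _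
  exact ⟨hmeas, hmap⟩

theorem integrable_exp_neg_dotProduct_mulVec_add_iff {n : ℕ} {M : Matrix (Fin n) (Fin n) ℝ}
    (hM : M.IsHermitian) (b : Fin n → ℝ) :
    Integrable (fun θ : Fin n → ℝ => exp (-(θ ⬝ᵥ M *ᵥ θ) + b ⬝ᵥ θ)) ↔ M.PosDef := by
  obtain ⟨U, hU, hdiag⟩ :
      ∃ U ∈ orthogonalGroup (Fin n) ℝ, Uᵀ * M * U = diagonal hM.eigenvalues :=
    ⟨_, hM.eigenvectorUnitary.2, by simpa [Unitary.conjStarAlgAut_apply, star_eq_conjTranspose]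
      using hM.conjStarAlgAut_star_eigenvectorUnitary⟩
  have hseparated (u : Fin n → ℝ) : exp (-((U *ᵥ u) ⬝ᵥ M *ᵥ (U *ᵥ u)) + b ⬝ᵥ (U *ᵥ u))
      = ∏ j, exp (-hM.eigenvalues j * u j ^ 2 + (Uᵀ *ᵥ b) j * u j) := by
    have hquad : (U *ᵥ u) ⬝ᵥ M *ᵥ (U *ᵥ u) = u ⬝ᵥ diagonal hM.eigenvalues *ᵥ u := by
      rw [← hdiag, ← mulVec_mulVec, ← mulVec_mulVec, dotProduct_mulVec u, vecMul_transpose]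
    have hlin : b ⬝ᵥ (U *ᵥ u) = (Uᵀ *ᵥ b) ⬝ᵥ u := by rw [dotProduct_mulVec, mulVec_transpose]
    rw [hquad, hlin, ← exp_sum]
    simp only [dotProduct, mulVec_diagonal, ← Finset.sum_neg_distrib, ← Finset.sum_add_distrib]
    exact congrArg exp (Finset.sum_congr rfl fun j _ => by ring)
  have hcont : Continuous fun θ : Fin n → ℝ => exp (-(θ ⬝ᵥ M *ᵥ θ) + b ⬝ᵥ θ) := by fun_prop
  rw [← (measurePreserving_mulVec_of_mem_orthogonalGroup hU).integrable_comp
    hcont.aestronglyMeasurable, hM.posDef_iff_eigenvalues_pos]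
  simp_rw [Function.comp_def, hseparated]
  rw [integrable_fin_prod_iff_of_ne_zero
    (f := fun j t => exp (-hM.eigenvalues j * t ^ 2 + (Uᵀ *ᵥ b) j * t)) fun _ _ => (exp_pos _).ne']
  simp_rw [integrable_exp_neg_mul_sq_add_mul_iff]

theorem lintegral_exp_neg_dotProduct_mulVec_add_lt_top_iff {n : ℕ}
    {M : Matrix (Fin n) (Fin n) ℝ} (hM : M.IsHermitian) (b : Fin n → ℝ) (c : ℝ) :
    ∫⁻ θ : Fin n → ℝ, ENNReal.ofReal (exp (-(θ ⬝ᵥ M *ᵥ θ) + b ⬝ᵥ θ + c)) < ⊤ ↔ M.PosDef := by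
  simp_rw [exp_add _ c]
  rw [lt_top_iff_ne_top, lintegral_ofReal_ne_top_iff_integrable (by fun_prop)
      (ae_of_all _ fun _ => by positivity), integrable_mul_const_iff (IsUnit.mk0 _ (exp_pos c).ne'),
    integrable_exp_neg_dotProduct_mulVec_add_iff hM]

theorem Matrix.posDef_smul_iff {ι : Type*} [Fintype ι] {a : ℝ} (ha : 0 < a) (N : Matrix ι ι ℝ) :
    (a • N).PosDef ↔ N.PosDef :=
  ⟨fun h => by simpa [smul_smul, ha.ne'] using h.smul (inv_pos.2 ha), fun h => h.smul ha⟩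

theorem Matrix.PosDef.posDef_sub_smul_vecMulVec_iff_s5 {ι : Type*} [Fintype ι] [DecidableEq ι]
    {A : Matrix ι ι ℝ} (hA : A.PosDef) (x : ι → ℝ) {c : ℝ} (hc : 0 ≤ c) :
    (A - c • vecMulVec x x).PosDef ↔ c * (x ⬝ᵥ A⁻¹ *ᵥ x) < 1 := by
  have hAt : Aᵀ = A := (isHermitian_iff_isSymm.1 hA.1).eq
  have hsymm (v w : ι → ℝ) : v ⬝ᵥ A *ᵥ w = w ⬝ᵥ A *ᵥ v := by
    rw [dotProduct_mulVec, ← mulVec_transpose, hAt, dotProduct_comm]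
  have hnonneg (v : ι → ℝ) : 0 ≤ v ⬝ᵥ A *ᵥ v := by
    simpa using hA.posSemidef.dotProduct_mulVec_nonneg v
  set u := A⁻¹ *ᵥ x
  have hAu : A *ᵥ u = x := by
    rw [mulVec_mulVec, mul_nonsing_inv _ ((isUnit_iff_isUnit_det A).1 hA.isUnit), one_mulVec]
  have hx (θ : ι → ℝ) : x ⬝ᵥ θ = u ⬝ᵥ A *ᵥ θ := by rw [hsymm, ← hAu, dotProduct_comm]
  have hq (θ : ι → ℝ) :
      θ ⬝ᵥ (A - c • vecMulVec x x) *ᵥ θ = θ ⬝ᵥ A *ᵥ θ - c * (u ⬝ᵥ A *ᵥ θ) ^ 2 := by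
    rw [sub_mulVec, smul_mulVec, vecMulVec_mulVec, dotProduct_sub, dotProduct_smul]
    simp only [op_smul_eq_smul, dotProduct_smul, smul_eq_mul, dotProduct_comm θ x, hx θ]
    ring
  have hCS (θ : ι → ℝ) : (u ⬝ᵥ A *ᵥ θ) ^ 2 ≤ (u ⬝ᵥ A *ᵥ u) * (θ ⬝ᵥ A *ᵥ θ) := by
    simpa only [toBilin'_apply', hsymm θ u, ← sq] using
      A.toBilin'.apply_mul_apply_le_of_forall_zero_le (by simpa only [toBilin'_apply']) u θ
  have hherm : (A - c • vecMulVec x x).IsHermitian := by simp [IsHermitian, hAt]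
  rw [hx u]
  constructor
  · intro hpos
    by_contra! hge
    have hu : u ≠ 0 := by
      rintro hu
      simp only [hu, mulVec_zero, dotProduct_zero, mul_zero] at hge
      linarith
    have hqu := hpos.dotProduct_mulVec_pos hu
    rw [star_trivial, hq] at hqu
    nlinarith [mul_nonneg (hnonneg u) (sub_nonneg.2 hge)]
  · intro hlt
    refine .of_dotProduct_mulVec_pos hherm fun θ hθ => ?_
    have hAθ := hA.dotProduct_mulVec_pos hθ
    rw [star_trivial] at hAθ ⊢
    rw [hq]
    nlinarith [hCS θ, hnonneg u]

theorem Matrix.mul_mul_transpose_apply_self {m ι : Type*} [Fintype ι] (X : Matrix m ι ℝ)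
    (B : Matrix ι ι ℝ) (i : m) : (X * B * Xᵀ) i i = X i ⬝ᵥ B *ᵥ X i := by
  simp only [mul_apply, transpose_apply, dotProduct, mulVec, Finset.mul_sum, Finset.sum_mul]
  rw [Finset.sum_comm]
  exact Finset.sum_congr rfl fun _ _ => Finset.sum_congr rfl fun _ _ => by ring

theorem Matrix.dotProduct_vecMulVec_self_mulVec {ι : Type*} [Fintype ι] (x θ : ι → ℝ) :
    θ ⬝ᵥ vecMulVec x x *ᵥ θ = (x ⬝ᵥ θ) ^ 2 := by
  rw [vecMulVec_mulVec, op_smul_eq_smul, dotProduct_smul, smul_eq_mul, dotProduct_comm, sq]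

theorem exists_exponent_eq_neg_quadratic_add_affine {m ι : Type*} [Fintype m] [Fintype ι]
    (X : Matrix m ι ℝ) (y : m → ℝ) (θ₀ : ι → ℝ) {σ : ℝ} (hσ : σ ≠ 0) {P : Matrix ι ι ℝ}
    (hP : Pᵀ = P) (i : m) :
    ∃ (b : ι → ℝ) (c : ℝ), ∀ θ : ι → ℝ,
      (y i - X i ⬝ᵥ θ) ^ 2 / σ ^ 2 - ((y - X *ᵥ θ) ⬝ᵥ (y - X *ᵥ θ)) / (2 * σ ^ 2)
          - ((θ - θ₀) ⬝ᵥ P *ᵥ (θ - θ₀)) / 2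
        = -(θ ⬝ᵥ ((2 * σ ^ 2)⁻¹ • (Xᵀ * X + σ ^ 2 • P - (2 : ℝ) • vecMulVec (X i) (X i))) *ᵥ θ)
          + b ⬝ᵥ θ + c := by
  refine ⟨(σ ^ 2)⁻¹ • (Xᵀ *ᵥ y - (2 * y i) • X i) + P *ᵥ θ₀,
    y i ^ 2 / σ ^ 2 - y ⬝ᵥ y / (2 * σ ^ 2) - θ₀ ⬝ᵥ P *ᵥ θ₀ / 2, fun θ => ?_⟩
  have hX (v : m → ℝ) : v ⬝ᵥ X *ᵥ θ = (Xᵀ *ᵥ v) ⬝ᵥ θ := by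
    rw [dotProduct_mulVec, mulVec_transpose]
  have hP' : θ₀ ⬝ᵥ P *ᵥ θ = (P *ᵥ θ₀) ⬝ᵥ θ := by
    rw [dotProduct_mulVec, ← mulVec_transpose, hP]
  simp only [dotProduct_sub, sub_dotProduct, mulVec_sub, smul_mulVec, add_mulVec, sub_mulVec,
    dotProduct_add, add_dotProduct, dotProduct_smul, smul_dotProduct, smul_eq_mul,
    dotProduct_vecMulVec_self_mulVec, hX, hP', mulVec_mulVec, dotProduct_comm (X *ᵥ θ) y,
    dotProduct_comm θ (P *ᵥ θ₀), dotProduct_comm θ ((Xᵀ * X) *ᵥ θ)]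
  field_simp
  ring

/-- **Theorem 2 (analytic core).** For Bayesian linear regression, the Gaussian-type
integral giving (up to constants) the asymptotic variance of the classical posterior
importance-sampling estimator of `p(yᵢ|y₋ᵢ)` is finite if and only if the Bayesian
leverage `Hᵢᵢ` is strictly less than `1/2`. -/
theorem classical_estimator_finite_variance_iff_leverage
    (n p : ℕ) (X : Matrix (Fin n) (Fin p) ℝ) (y : Fin n → ℝ) (θ₀ : Fin p → ℝ)
    (σ : ℝ) (hσ : 0 < σ)
    (S : Matrix (Fin p) (Fin p) ℝ) (hS : S.PosDef)
    (H : Matrix (Fin n) (Fin n) ℝ)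
    (hH : H = X * (Xᵀ * X + σ ^ 2 • S⁻¹)⁻¹ * Xᵀ)
    (i : Fin n) :
    (∫⁻ θ : Fin p → ℝ,
        ENNReal.ofReal (Real.exp ((y i - X i ⬝ᵥ θ) ^ 2 / σ ^ 2
          - ((y - X.mulVec θ) ⬝ᵥ (y - X.mulVec θ)) / (2 * σ ^ 2)
          - ((θ - θ₀) ⬝ᵥ S⁻¹.mulVec (θ - θ₀)) / 2))) < ⊤
      ↔ H i i < 1 / 2 := by
  have hSinv : (S⁻¹)ᵀ = S⁻¹ := (isHermitian_iff_isSymm.1 hS.inv.1).eq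
  have hA : (Xᵀ * X + σ ^ 2 • S⁻¹).PosDef := by
    simpa using PosDef.posSemidef_add (posSemidef_conjTranspose_mul_self X)
      (hS.inv.smul (by positivity))
  have hM : ((2 * σ ^ 2)⁻¹ •
      (Xᵀ * X + σ ^ 2 • S⁻¹ - (2 : ℝ) • vecMulVec (X i) (X i))).IsHermitian := by
    simp [IsHermitian, hSinv]
  obtain ⟨b, c, hexp⟩ := exists_exponent_eq_neg_quadratic_add_affine X y θ₀ hσ.ne' hSinv i
  simp_rw [hexp]
  rw [lintegral_exp_neg_dotProduct_mulVec_add_lt_top_iff hM, posDef_smul_iff (by positivity),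
    hA.posDef_sub_smul_vecMulVec_iff_s5 _ zero_le_two, hH, mul_mul_transpose_apply_self]
  constructor <;> intro h <;> linarith
end

section
/- Fix n ∈ ℕ, τ > 0, σ > 0, and c ∈ [0,∞). Let (X_p)_{p≥1} be a sequence of real matrices, X_p of size n×p, such that p^{-1} X_p X_pᵀ → τ² I_n entrywise as p → ∞, and let (ν_p)_{p≥1} be positive reals with p ν_p² → c as p → ∞. Let H^{(p)} = X_p (X_pᵀ X_p + σ² ν_p^{-2} I_p)^{-1} X_pᵀ. Then, for each i ∈ {1,…,n}, the diagonal entry H^{(p)}_{ii} converges to cτ²/(σ² + cτ²) as p → ∞. -/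
/-!
Push-through identity: `X (XᵀX + λI)⁻¹ Xᵀ = (λ⁻¹XXᵀ + I)⁻¹ λ⁻¹XXᵀ` with `λ = σ²/νₚ²`, which
moves the inversion from `p × p` to the fixed size `n × n`. There, `λ⁻¹XXᵀ = (pνₚ²/σ²)(p⁻¹XXᵀ)`
tends to `(cτ²/σ²) I`, and `A ↦ (A + I)⁻¹A` is continuous at that invertible scalar matrix,
where it takes the value `cτ²/(σ² + cτ²) I`.
-/

open Matrix Filter Topology

namespace Matrix

variable {m k K : Type*} [DecidableEq m] [DecidableEq k]

theorem smul_one_add_one [Semiring K] (a : K) : (a • 1 + 1 : Matrix m m K) = (a + 1) • 1 := by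
  rw [add_smul, one_smul]

variable [Fintype m] [Fintype k]

theorem mul_inv_mul_add_smul_one [CommRing K] (X : Matrix m k K) (Y : Matrix k m K) (l : K)
    (hXY : IsUnit (X * Y + l • 1).det) (hYX : IsUnit (Y * X + l • 1).det) :
    X * (Y * X + l • 1)⁻¹ = (X * Y + l • 1)⁻¹ * X := by
  have hcomm : (X * Y + l • 1) * X = X * (Y * X + l • 1) := by
    simp only [Matrix.add_mul, Matrix.mul_add, Matrix.mul_assoc, Matrix.smul_mul,
      Matrix.mul_smul, Matrix.one_mul, Matrix.mul_one]
  calc X * (Y * X + l • 1)⁻¹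
      = (X * Y + l • 1)⁻¹ * ((X * Y + l • 1) * X) * (Y * X + l • 1)⁻¹ := by
        rw [nonsing_inv_mul_cancel_left _ _ hXY]
    _ = (X * Y + l • 1)⁻¹ * X := by
        rw [hcomm, ← Matrix.mul_assoc, mul_nonsing_inv_cancel_right _ _ hYX]

theorem isUnit_det_add_smul_one_of_posSemidef {A : Matrix m m ℝ} (hA : A.PosSemidef) {l : ℝ}
    (hl : 0 < l) : IsUnit (A + l • 1).det :=
  (isUnit_iff_isUnit_det _).mp (PosDef.posSemidef_add hA (PosDef.one.smul hl)).isUnit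

theorem mul_inv_transpose_mul_add_smul_one_mul_transpose (X : Matrix m k ℝ) {l : ℝ}
    (hl : 0 < l) :
    X * (Xᵀ * X + l • 1)⁻¹ * Xᵀ = (l⁻¹ • (X * Xᵀ) + 1)⁻¹ * (l⁻¹ • (X * Xᵀ)) := by
  have hXXt : IsUnit (X * Xᵀ + l • 1).det := isUnit_det_add_smul_one_of_posSemidef
    (by simpa using posSemidef_self_mul_conjTranspose X) hl
  have hXtX : IsUnit (Xᵀ * X + l • 1).det := isUnit_det_add_smul_one_of_posSemidef
    (by simpa using posSemidef_conjTranspose_mul_self X) hl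
  have hscale : l⁻¹ • (X * Xᵀ) + 1 = l⁻¹ • (X * Xᵀ + l • 1) := by
    rw [smul_add, smul_smul, inv_mul_cancel₀ hl.ne', one_smul]
  have : Invertible l⁻¹ := invertibleOfNonzero (inv_ne_zero hl.ne')
  rw [mul_inv_mul_add_smul_one X Xᵀ l hXXt hXtX, hscale, inv_smul _ _ hXXt, invOf_eq_inv,
    inv_inv, smul_mul_smul, mul_inv_cancel₀ hl.ne', one_smul, Matrix.mul_assoc]

theorem inv_smul_one_add_one_mul_smul_one [Field K] {a : K} (ha : a + 1 ≠ 0) :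
    (a • 1 + 1 : Matrix m m K)⁻¹ * (a • 1) = (a / (a + 1)) • 1 := by
  have : Invertible (a + 1) := invertibleOfNonzero ha
  rw [smul_one_add_one, inv_smul _ _ (by simp), inv_one, invOf_eq_inv, smul_mul_smul,
    Matrix.mul_one, div_eq_inv_mul]

theorem tendsto_inv_add_one_mul [NormedField K] {ι : Type*} {l : Filter ι}
    {A : ι → Matrix m m K} {A₀ : Matrix m m K} (hA : Tendsto A l (𝓝 A₀))
    (hA₀ : (A₀ + 1).det ≠ 0) :
    Tendsto (fun i => (A i + 1)⁻¹ * A i) l (𝓝 ((A₀ + 1)⁻¹ * A₀)) := by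
  have hinv : ContinuousAt Inv.inv (A₀ + 1) :=
    continuousAt_matrix_inv _ (by simpa [Ring.inverse_eq_inv'] using continuousAt_inv₀ hA₀)
  exact (hinv.tendsto.comp (hA.add_const 1)).mul hA

end Matrix

theorem tendsto_smul_of_tendsto_natCast_mul {E : Type*} [AddCommGroup E] [Module ℝ E]
    [TopologicalSpace E] [ContinuousSMul ℝ E] {s : ℕ → ℝ} {G : ℕ → E} {a : ℝ} {M : E}
    (hs : Tendsto (fun p : ℕ => (p : ℝ) * s p) atTop (𝓝 a))
    (hG : Tendsto (fun p : ℕ => (p : ℝ)⁻¹ • G p) atTop (𝓝 M)) :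
    Tendsto (fun p => s p • G p) atTop (𝓝 (a • M)) := by
  refine (hs.smul hG).congr' ?_
  filter_upwards [eventually_ne_atTop 0] with p hp
  rw [smul_smul, mul_comm, ← mul_assoc, inv_mul_cancel₀ (Nat.cast_ne_zero.2 hp), one_mul]

theorem bayesian_leverage_limit_general
    (n : ℕ) (τ σ c : ℝ) (hσ : 0 < σ) (hc : 0 ≤ c)
    (X : (p : ℕ) → Matrix (Fin n) (Fin p) ℝ)
    (hX : ∀ a b, Tendsto (fun (p : ℕ) => (p : ℝ)⁻¹ * (X p * (X p)ᵀ) a b) atTop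
      (𝓝 ((τ ^ 2 • (1 : Matrix (Fin n) (Fin n) ℝ)) a b)))
    (ν : ℕ → ℝ) (hν : ∀ p, 0 < ν p)
    (hνc : Tendsto (fun (p : ℕ) => (p : ℝ) * (ν p) ^ 2) atTop (𝓝 c))
    (i : Fin n) :
    Tendsto (fun (p : ℕ) =>
        (X p * ((X p)ᵀ * X p + (σ ^ 2 / (ν p) ^ 2) • (1 : Matrix (Fin p) (Fin p) ℝ))⁻¹
          * (X p)ᵀ) i i)
      atTop (𝓝 (c * τ ^ 2 / (σ ^ 2 + c * τ ^ 2))) := by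
  have hσ2 : 0 < σ ^ 2 := by positivity
  have hgram : Tendsto (fun p : ℕ => (p : ℝ)⁻¹ • (X p * (X p)ᵀ)) atTop (𝓝 (τ ^ 2 • 1)) :=
    tendsto_pi_nhds.2 fun a => tendsto_pi_nhds.2 fun b => by simpa using hX a b
  have hscaled : Tendsto (fun p => (ν p ^ 2 / σ ^ 2) • (X p * (X p)ᵀ)) atTop
      (𝓝 ((c / σ ^ 2 * τ ^ 2) • 1)) := by
    rw [← smul_smul]
    exact tendsto_smul_of_tendsto_natCast_mul
      (by simpa only [mul_div_assoc] using hνc.div_const (σ ^ 2)) hgram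
  have ha : c / σ ^ 2 * τ ^ 2 + 1 ≠ 0 := by positivity
  have hlim := Matrix.tendsto_inv_add_one_mul hscaled (by
    rw [Matrix.smul_one_add_one, det_smul, det_one, mul_one]
    exact pow_ne_zero _ ha)
  rw [Matrix.inv_smul_one_add_one_mul_smul_one ha] at hlim
  have hentry := tendsto_pi_nhds.1 (tendsto_pi_nhds.1 hlim i) i
  convert hentry using 2 with p
  · rw [Matrix.mul_inv_transpose_mul_add_smul_one_mul_transpose _
      (div_pos hσ2 (pow_pos (hν p) 2)), inv_div]
  · rw [Matrix.smul_apply, one_apply_eq, smul_eq_mul, mul_one]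
    field_simp
    ring

/-- **Proposition 1 (deterministic core, finite `c`).** If `p⁻¹XₚXₚᵀ → τ²Iₙ` entrywise
and `pνₚ² → c`, then each Bayesian leverage `H⁽ᵖ⁾ᵢᵢ` converges to `cτ²/(σ² + cτ²)`. -/
theorem bayesian_leverage_limit
    (n : ℕ) (τ σ c : ℝ) (hτ : 0 < τ) (hσ : 0 < σ) (hc : 0 ≤ c)
    (X : (p : ℕ) → Matrix (Fin n) (Fin p) ℝ)
    (hX : ∀ a b, Tendsto (fun (p : ℕ) => (p : ℝ)⁻¹ * (X p * (X p)ᵀ) a b) atTop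
      (𝓝 ((τ ^ 2 • (1 : Matrix (Fin n) (Fin n) ℝ)) a b)))
    (ν : ℕ → ℝ) (hν : ∀ p, 0 < ν p)
    (hνc : Tendsto (fun (p : ℕ) => (p : ℝ) * (ν p) ^ 2) atTop (𝓝 c))
    (i : Fin n) :
    Tendsto (fun (p : ℕ) =>
        (X p * ((X p)ᵀ * X p + (σ ^ 2 / (ν p) ^ 2) • (1 : Matrix (Fin p) (Fin p) ℝ))⁻¹
          * (X p)ᵀ) i i)
      atTop (𝓝 (c * τ ^ 2 / (σ ^ 2 + c * τ ^ 2))) :=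
  bayesian_leverage_limit_general n τ σ c hσ hc X hX ν hν hνc i
end

section
/- Fix n ∈ ℕ, τ > 0, and σ > 0. Let (X_p)_{p≥1} be a sequence of real matrices, X_p of size n×p, such that p^{-1} X_p X_pᵀ → τ² I_n entrywise as p → ∞, and let (ν_p)_{p≥1} be positive reals with p ν_p² → ∞ as p → ∞. Let H^{(p)} = X_p (X_pᵀ X_p + σ² ν_p^{-2} I_p)^{-1} X_pᵀ. Then H^{(p)} → I_n entrywise as p → ∞; in particular H^{(p)}_{ii} → 1 for each i ∈ {1,…,n}. -/
open Matrix Filter Topology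

/-! By the push-through identity, `X (XᵀX + c)⁻¹ Xᵀ = (XXᵀ + c)⁻¹ XXᵀ` with `c = σ²/ν²`, a product
of `n × n` matrices. Dividing both factors by `p` turns it into `(p⁻¹XXᵀ + c/p)⁻¹ (p⁻¹XXᵀ)`,
where `p⁻¹XXᵀ → τ²I` is invertible and `c/p = σ²/(pν²) → 0`; continuity of matrix inversion at
an invertible matrix then gives the limit `(τ²I)⁻¹ τ²I = I`. -/

namespace Matrix

variable {m n : Type*} [Fintype m] [Fintype n] [DecidableEq n]

theorem mul_nonsing_inv_eq_nonsing_inv_mul {K : Type*} [CommRing K] [DecidableEq m]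
    {A : Matrix n n K} {B : Matrix m m K} {X : Matrix m n K}
    (hA : IsUnit A.det) (hB : IsUnit B.det) (h : B * X = X * A) :
    X * A⁻¹ = B⁻¹ * X :=
  calc X * A⁻¹ = B⁻¹ * (B * X) * A⁻¹ := by rw [nonsing_inv_mul_cancel_left B X hB]
    _ = B⁻¹ * X := by rw [h, ← Matrix.mul_assoc, mul_nonsing_inv_cancel_right A (B⁻¹ * X) hA]

theorem inv_smul_mul_smul {K : Type*} [Field K] {t : K} (ht : t ≠ 0) {B : Matrix n n K}
    (hB : IsUnit B.det) (A : Matrix n n K) : (t • B)⁻¹ * (t • A) = B⁻¹ * A := by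
  have := invertibleOfNonzero ht
  rw [inv_smul B t hB, smul_mul_smul_comm, invOf_eq_inv, inv_mul_cancel₀ ht, one_smul]

theorem isUnit_det_transpose_mul_self_add_smul_one (X : Matrix m n ℝ) {c : ℝ} (hc : 0 < c) :
    IsUnit (Xᵀ * X + c • (1 : Matrix n n ℝ)).det := by
  rw [← isUnit_iff_isUnit_det, ← conjTranspose_eq_transpose_of_trivial]
  exact (PosDef.posSemidef_add (posSemidef_conjTranspose_mul_self X) (PosDef.one.smul hc)).isUnit

theorem isUnit_det_mul_transpose_add_smul_one (X : Matrix n m ℝ) {c : ℝ} (hc : 0 < c) :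
    IsUnit (X * Xᵀ + c • (1 : Matrix n n ℝ)).det := by
  simpa using isUnit_det_transpose_mul_self_add_smul_one Xᵀ hc

/-- Push-through identity, from `(X Xᵀ + c) X = X (Xᵀ X + c)`. -/
theorem mul_inv_transpose_mul_self_add_smul_one_mul_transpose [DecidableEq m]
    (X : Matrix m n ℝ) {c : ℝ} (hc : 0 < c) :
    X * (Xᵀ * X + c • (1 : Matrix n n ℝ))⁻¹ * Xᵀ =
      (X * Xᵀ + c • (1 : Matrix m m ℝ))⁻¹ * (X * Xᵀ) := by
  rw [mul_nonsing_inv_eq_nonsing_inv_mul (isUnit_det_transpose_mul_self_add_smul_one X hc)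
    (isUnit_det_mul_transpose_add_smul_one X hc), Matrix.mul_assoc]
  simp only [Matrix.add_mul, Matrix.mul_add, Matrix.mul_assoc, smul_mul, Matrix.mul_smul,
    Matrix.one_mul, Matrix.mul_one]

theorem _root_.Filter.Tendsto.matrix_inv {ι K : Type*} [NormedField K] {l : Filter ι}
    {M : ι → Matrix n n K} {A : Matrix n n K} (hM : Tendsto M l (𝓝 A)) (hA : IsUnit A.det) :
    Tendsto (fun i => (M i)⁻¹) l (𝓝 A⁻¹) := by
  refine (continuousAt_matrix_inv A ?_).tendsto.comp hM
  obtain ⟨u, hu⟩ := hA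
  rw [← hu]
  exact NormedRing.inverse_continuousAt u

theorem tendsto_inv_add_smul_one_mul {ι K : Type*} [NormedField K] {l : Filter ι}
    {M : ι → Matrix n n K} {A : Matrix n n K} {d : ι → K} (hM : Tendsto M l (𝓝 A))
    (hA : IsUnit A.det) (hd : Tendsto d l (𝓝 0)) :
    Tendsto (fun i => (M i + d i • (1 : Matrix n n K))⁻¹ * M i) l (𝓝 1) := by
  have hsum : Tendsto (fun i => M i + d i • (1 : Matrix n n K)) l (𝓝 A) := by
    simpa using hM.add (hd.smul_const 1)
  simpa [nonsing_inv_mul _ hA] using (hsum.matrix_inv hA).mul hM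

theorem tendsto_mul_inv_transpose_mul_self_add_smul_one_mul_transpose {ι : Type*}
    {κ : ι → Type*} [∀ i, Fintype (κ i)] [∀ i, DecidableEq (κ i)] {l : Filter ι}
    {X : (i : ι) → Matrix n (κ i) ℝ} {s c : ι → ℝ} {A : Matrix n n ℝ}
    (hX : Tendsto (fun i => (s i)⁻¹ • (X i * (X i)ᵀ)) l (𝓝 A)) (hA : IsUnit A.det)
    (hs : ∀ᶠ i in l, s i ≠ 0) (hc : ∀ᶠ i in l, 0 < c i)
    (hcs : Tendsto (fun i => c i / s i) l (𝓝 0)) :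
    Tendsto (fun i => X i * ((X i)ᵀ * X i + c i • (1 : Matrix (κ i) (κ i) ℝ))⁻¹ * (X i)ᵀ) l
      (𝓝 1) := by
  refine (tendsto_inv_add_smul_one_mul hX hA hcs).congr' ?_
  filter_upwards [hs, hc] with i hsi hci
  rw [mul_inv_transpose_mul_self_add_smul_one_mul_transpose (X i) hci,
    ← inv_smul_mul_smul (inv_ne_zero hsi) (isUnit_det_mul_transpose_add_smul_one (X i) hci),
    smul_add, smul_smul, inv_mul_eq_div]

end Matrix

theorem bayesian_leverage_limit_infinite_c_general
    (n : ℕ) (τ σ : ℝ) (hτ : 0 < τ) (hσ : 0 < σ)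
    (X : (p : ℕ) → Matrix (Fin n) (Fin p) ℝ)
    (hX : ∀ a b, Tendsto (fun (p : ℕ) => (p : ℝ)⁻¹ * (X p * (X p)ᵀ) a b) atTop
      (𝓝 ((τ ^ 2 • (1 : Matrix (Fin n) (Fin n) ℝ)) a b)))
    (ν : ℕ → ℝ)
    (hνc : Tendsto (fun (p : ℕ) => (p : ℝ) * (ν p) ^ 2) atTop atTop) :
    (∀ a b, Tendsto (fun (p : ℕ) =>
        (X p * ((X p)ᵀ * X p + (σ ^ 2 / (ν p) ^ 2) • (1 : Matrix (Fin p) (Fin p) ℝ))⁻¹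
          * (X p)ᵀ) a b)
      atTop (𝓝 ((1 : Matrix (Fin n) (Fin n) ℝ) a b))) ∧
    (∀ i, Tendsto (fun (p : ℕ) =>
        (X p * ((X p)ᵀ * X p + (σ ^ 2 / (ν p) ^ 2) • (1 : Matrix (Fin p) (Fin p) ℝ))⁻¹
          * (X p)ᵀ) i i)
      atTop (𝓝 (1 : ℝ))) := by
  have hGram : Tendsto (fun p : ℕ => (p : ℝ)⁻¹ • (X p * (X p)ᵀ)) atTop
      (𝓝 (τ ^ 2 • (1 : Matrix (Fin n) (Fin n) ℝ))) :=
    tendsto_pi_nhds.mpr fun a => tendsto_pi_nhds.mpr fun b => by simpa using hX a b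
  have hdet : IsUnit (τ ^ 2 • (1 : Matrix (Fin n) (Fin n) ℝ)).det := by
    simp [hτ.ne']
  have hpos : ∀ᶠ p : ℕ in atTop, 0 < (p : ℝ) * ν p ^ 2 := hνc.eventually_gt_atTop 0
  have hridge : Tendsto (fun p : ℕ => σ ^ 2 / ν p ^ 2 / p) atTop (𝓝 0) := by
    simpa only [div_div, mul_comm] using tendsto_const_nhds.div_atTop hνc
  have hH := tendsto_mul_inv_transpose_mul_self_add_smul_one_mul_transpose hGram hdet
    (hpos.mono fun p hp => (pos_of_mul_pos_left hp (sq_nonneg _)).ne')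
    (hpos.mono fun p hp => div_pos (pow_pos hσ 2) (pos_of_mul_pos_right hp (Nat.cast_nonneg p)))
    hridge
  have hentry a b := tendsto_pi_nhds.mp (tendsto_pi_nhds.mp hH a) b
  exact ⟨hentry, fun i => by simpa using hentry i i⟩

/-- **Proposition 1 (case `c = ∞`).** If `p⁻¹XₚXₚᵀ → τ²Iₙ` entrywise and `pνₚ² → ∞`,
then the Bayesian hat matrix `H⁽ᵖ⁾` converges entrywise to the identity; in
particular each leverage `H⁽ᵖ⁾ᵢᵢ → 1`. -/
theorem bayesian_leverage_limit_infinite_c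
    (n : ℕ) (τ σ : ℝ) (hτ : 0 < τ) (hσ : 0 < σ)
    (X : (p : ℕ) → Matrix (Fin n) (Fin p) ℝ)
    (hX : ∀ a b, Tendsto (fun (p : ℕ) => (p : ℝ)⁻¹ * (X p * (X p)ᵀ) a b) atTop
      (𝓝 ((τ ^ 2 • (1 : Matrix (Fin n) (Fin n) ℝ)) a b)))
    (ν : ℕ → ℝ) (hν : ∀ p, 0 < ν p)
    (hνc : Tendsto (fun (p : ℕ) => (p : ℝ) * (ν p) ^ 2) atTop atTop) :
    (∀ a b, Tendsto (fun (p : ℕ) =>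
        (X p * ((X p)ᵀ * X p + (σ ^ 2 / (ν p) ^ 2) • (1 : Matrix (Fin p) (Fin p) ℝ))⁻¹
          * (X p)ᵀ) a b)
      atTop (𝓝 ((1 : Matrix (Fin n) (Fin n) ℝ) a b))) ∧
    (∀ i, Tendsto (fun (p : ℕ) =>
        (X p * ((X p)ᵀ * X p + (σ ^ 2 / (ν p) ^ 2) • (1 : Matrix (Fin p) (Fin p) ℝ))⁻¹
          * (X p)ᵀ) i i)
      atTop (𝓝 (1 : ℝ))) :=
  bayesian_leverage_limit_infinite_c_general n τ σ hτ hσ X hX ν hνc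
end

section
/- Fix n ∈ ℕ and c > 0. Let g₁,…,gₙ : ℝ → [0,∞) be bounded measurable functions, and let (A_p)_{p≥1} be a sequence of symmetric positive definite n×n real matrices with A_p → c I_n entrywise as p → ∞. For a symmetric positive definite n×n matrix A, let φ_A(η) = (2π)^{-n/2}(det A)^{-1/2} exp(−½ ηᵀA^{-1}η) denote the centered Gaussian density on ℝⁿ, and for c > 0 let φ_c(t) = (2πc)^{-1/2} exp(−t²/(2c)) denote the univariate version; integrals are with respect to Lebesgue measure. Then ∫_{ℝⁿ} ∏_{j=1}^n gⱼ(ηⱼ) φ_{A_p}(η) dη → ∏_{j=1}^n ∫_ℝ gⱼ(t) φ_c(t) dt as p → ∞. -/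
/-! Since `Aₚ → c I`, eventually `det Aₚ ≥ cⁿ / 2` and `ηᵀ Aₚ⁻¹ η ≥ |η|² / (2c)`, so the
integrands are dominated by a fixed multiple of `exp (-|η|² / (4c))` and dominated convergence
applies. The limit `∫ ∏ gⱼ(ηⱼ) φ_{cI}(η) dη` factorises by Fubini, because `φ_{cI}` is the product
of the univariate densities `φ_c(ηⱼ)`. -/

open MeasureTheory Matrix Filter Topology

/-- The centered Gaussian density on `ℝᵐ` with covariance matrix `A`. -/
noncomputable def gaussDensity {m : ℕ} (A : Matrix (Fin m) (Fin m) ℝ)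
    (η : Fin m → ℝ) : ℝ :=
  (Real.sqrt ((2 * Real.pi) ^ m * A.det))⁻¹ * Real.exp (-(η ⬝ᵥ A⁻¹.mulVec η) / 2)

/-- The centered univariate Gaussian density with variance `c`. -/
noncomputable def gauss1 (c t : ℝ) : ℝ :=
  (Real.sqrt (2 * Real.pi * c))⁻¹ * Real.exp (-(t ^ 2) / (2 * c))

open Real

lemma Matrix.inv_smul_one {ι : Type*} [Fintype ι] [DecidableEq ι] {d : ℝ} (hd : d ≠ 0) :
    (d • (1 : Matrix ι ι ℝ))⁻¹ = d⁻¹ • 1 :=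
  inv_eq_right_inv (by rw [smul_mul_smul_comm, one_mul, mul_inv_cancel₀ hd, one_smul])

lemma dotProduct_smul_one_mulVec {ι : Type*} [Fintype ι] [DecidableEq ι] (d : ℝ)
    (η : ι → ℝ) :
    η ⬝ᵥ (d • (1 : Matrix ι ι ℝ)) *ᵥ η = d * ∑ j, η j ^ 2 := by
  simp [smul_mulVec, dotProduct, Finset.mul_sum, sq, mul_left_comm]

lemma abs_dotProduct_mulVec_le {ι : Type*} [Fintype ι] {E : Matrix ι ι ℝ} {ε : ℝ}
    (hE : ∀ a b, |E a b| ≤ ε) (η : ι → ℝ) :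
    |η ⬝ᵥ E *ᵥ η| ≤ ε * Fintype.card ι * ∑ j, η j ^ 2 := by
  rcases isEmpty_or_nonempty ι with hι | ⟨⟨a⟩⟩
  · simp
  have hε : 0 ≤ ε := (abs_nonneg _).trans (hE a a)
  calc |η ⬝ᵥ E *ᵥ η| = |∑ a, ∑ b, η a * E a b * η b| := by
        simp only [dotProduct, mulVec, Finset.mul_sum, mul_assoc]
    _ ≤ ∑ a, ∑ b, |η a| * ε * |η b| := by
        refine (Finset.abs_sum_le_sum_abs _ _).trans (Finset.sum_le_sum fun a _ => ?_)
        refine (Finset.abs_sum_le_sum_abs _ _).trans (Finset.sum_le_sum fun b _ => ?_)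
        rw [abs_mul, abs_mul]
        gcongr
        exact hE a b
    _ = ε * (∑ a, |η a|) ^ 2 := by
        rw [sq, Finset.sum_mul_sum, Finset.mul_sum]
        refine Finset.sum_congr rfl fun a _ => ?_
        rw [Finset.mul_sum]
        exact Finset.sum_congr rfl fun b _ => by ring
    _ ≤ ε * (Fintype.card ι * ∑ a, |η a| ^ 2) := by
        gcongr
        exact sq_sum_le_card_mul_sum_sq
    _ = ε * Fintype.card ι * ∑ j, η j ^ 2 := by simp only [sq_abs, mul_assoc]

lemma eventually_half_mul_le_dotProduct_mulVec {ι α : Type*} [Fintype ι] [DecidableEq ι]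
    {l : Filter α} {B : α → Matrix ι ι ℝ} {d : ℝ} (hd : 0 < d)
    (hB : Tendsto B l (𝓝 (d • 1))) :
    ∀ᶠ p in l, ∀ η : ι → ℝ, d / 2 * ∑ j, η j ^ 2 ≤ η ⬝ᵥ B p *ᵥ η := by
  set δ := d / (2 * (Fintype.card ι + 1))
  have hδ : 0 < δ := by positivity
  have hclose : ∀ᶠ p in l, ∀ a b, |(B p - d • 1) a b| ≤ δ := by
    have h0 : Tendsto (fun p => B p - d • 1) l (𝓝 0) := by
      simpa using hB.sub_const (d • (1 : Matrix ι ι ℝ))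
    simp only [eventually_all]
    intro a b
    have hab := tendsto_pi_nhds.1 (tendsto_pi_nhds.1 h0 a) b
    filter_upwards [Metric.tendsto_nhds.1 hab δ hδ] with p hp
    simpa [Real.dist_eq] using hp.le
  filter_upwards [hclose] with p hp η
  have hsplit : η ⬝ᵥ B p *ᵥ η = d * ∑ j, η j ^ 2 + η ⬝ᵥ (B p - d • 1) *ᵥ η := by
    rw [sub_mulVec, dotProduct_sub, dotProduct_smul_one_mulVec]; ring
  have hδcard : δ * Fintype.card ι ≤ d / 2 := by
    rw [div_mul_eq_mul_div, div_le_div_iff₀ (by positivity) two_pos]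
    nlinarith
  have hS : 0 ≤ ∑ j, η j ^ 2 := Finset.sum_nonneg fun j _ => sq_nonneg _
  nlinarith [neg_abs_le (η ⬝ᵥ (B p - d • 1) *ᵥ η), abs_dotProduct_mulVec_le hp η,
    mul_le_mul_of_nonneg_right hδcard hS]

lemma continuous_gaussDensity {m : ℕ} (A : Matrix (Fin m) (Fin m) ℝ) :
    Continuous (gaussDensity A) := by
  unfold gaussDensity
  fun_prop

lemma continuousAt_gaussDensity {m : ℕ} {A : Matrix (Fin m) (Fin m) ℝ} (hA : 0 < A.det)
    (η : Fin m → ℝ) : ContinuousAt (fun B => gaussDensity B η) A := by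
  have hinv : ContinuousAt Inv.inv A :=
    continuousAt_matrix_inv A (by rw [Ring.inverse_eq_inv']; exact continuousAt_inv₀ hA.ne')
  unfold gaussDensity
  refine ContinuousAt.mul ?_ ?_
  · refine ContinuousAt.inv₀ (by fun_prop) (sqrt_pos.2 (by positivity)).ne'
  · fun_prop

lemma gaussDensity_smul_one {m : ℕ} {c : ℝ} (hc : 0 < c) (η : Fin m → ℝ) :
    gaussDensity (c • 1) η = ∏ j, gauss1 c (η j) := by
  have hsqrt :
      √((2 * π) ^ m * (c • (1 : Matrix (Fin m) (Fin m) ℝ)).det) = √(2 * π * c) ^ m := by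
    rw [det_smul, det_one, mul_one, Fintype.card_fin, ← mul_pow,
      ← sqrt_sq (pow_nonneg (sqrt_nonneg (2 * π * c)) m), ← pow_mul, pow_mul',
      sq_sqrt (by positivity)]
  have hexp : -(η ⬝ᵥ (c • (1 : Matrix (Fin m) (Fin m) ℝ))⁻¹ *ᵥ η) / 2 =
      ∑ j, -(η j ^ 2) / (2 * c) := by
    rw [Matrix.inv_smul_one hc.ne', dotProduct_smul_one_mulVec, Finset.mul_sum,
      ← Finset.sum_neg_distrib, Finset.sum_div]
    exact Finset.sum_congr rfl fun j _ => by field_simp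
  rw [gaussDensity, hsqrt, hexp, exp_sum, ← inv_pow, ← Fin.prod_const,
    ← Finset.prod_mul_distrib]
  rfl

lemma gaussDensity_nonneg {m : ℕ} (A : Matrix (Fin m) (Fin m) ℝ) (η : Fin m → ℝ) :
    0 ≤ gaussDensity A η := by
  unfold gaussDensity
  positivity

lemma gaussDensity_le {m : ℕ} {A : Matrix (Fin m) (Fin m) ℝ} {δ b : ℝ} (hδ : 0 < δ)
    (hdet : δ ≤ A.det) {η : Fin m → ℝ} (hq : b * ∑ j, η j ^ 2 ≤ η ⬝ᵥ A⁻¹ *ᵥ η) :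
    gaussDensity A η ≤ (√((2 * π) ^ m * δ))⁻¹ * ∏ j, exp (-(b / 2) * η j ^ 2) := by
  rw [gaussDensity, ← exp_sum]
  gcongr
  rw [← Finset.mul_sum]
  linarith

lemma integrable_prod_exp_neg_mul_sq {ι : Type*} [Fintype ι] {b : ℝ} (hb : 0 < b) :
    Integrable (fun η : ι → ℝ => ∏ j, exp (-b * η j ^ 2)) :=
  Integrable.fintype_prod fun _ => integrable_exp_neg_mul_sq hb

theorem tendsto_integral_mul_gaussDensity {α : Type*} {l : Filter α} [l.IsCountablyGenerated]
    {m : ℕ} {c : ℝ} (hc : 0 < c) {F : (Fin m → ℝ) → ℝ} (hFm : AEStronglyMeasurable F) {C : ℝ}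
    (hFC : ∀ η, ‖F η‖ ≤ C) {A : α → Matrix (Fin m) (Fin m) ℝ} (hA : Tendsto A l (𝓝 (c • 1))) :
    Tendsto (fun p => ∫ η, F η * gaussDensity (A p) η) l
      (𝓝 (∫ η, F η * gaussDensity (c • 1) η)) := by
  set δ := (c • (1 : Matrix (Fin m) (Fin m) ℝ)).det / 2
  have hdet_pos : 0 < (c • (1 : Matrix (Fin m) (Fin m) ℝ)).det := by
    rw [det_smul, det_one, mul_one]; positivity
  have hδ : 0 < δ := half_pos hdet_pos
  have hdet : ∀ᶠ p in l, δ ≤ (A p).det :=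
    ((continuous_id.matrix_det.tendsto _).comp hA).eventually
      ((eventually_gt_nhds (half_lt_self hdet_pos)).mono fun _ => le_of_lt)
  have hinv : Tendsto (fun p => (A p)⁻¹) l (𝓝 (c⁻¹ • 1)) := by
    rw [← Matrix.inv_smul_one hc.ne']
    exact (continuousAt_matrix_inv _
      (by rw [Ring.inverse_eq_inv']; exact continuousAt_inv₀ hdet_pos.ne')).tendsto.comp hA
  have hq := eventually_half_mul_le_dotProduct_mulVec (inv_pos.2 hc) hinv
  refine tendsto_integral_filter_of_dominated_convergence
    (fun η => C * ((√((2 * π) ^ m * δ))⁻¹ * ∏ j, exp (-(c⁻¹ / 2 / 2) * η j ^ 2)))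
    (Eventually.of_forall fun p => hFm.mul (continuous_gaussDensity _).aestronglyMeasurable)
    ?_ ?_ ?_
  · filter_upwards [hdet, hq] with p hdetp hqp
    refine Eventually.of_forall fun η => ?_
    rw [norm_mul, norm_of_nonneg (gaussDensity_nonneg _ _)]
    exact mul_le_mul (hFC η) (gaussDensity_le hδ hdetp (hqp η)) (gaussDensity_nonneg _ _)
      ((norm_nonneg _).trans (hFC η))
  · exact ((integrable_prod_exp_neg_mul_sq (by positivity)).const_mul _).const_mul _
  · exact Eventually.of_forall fun η =>
      ((continuousAt_gaussDensity hdet_pos η).tendsto.comp hA).const_mul (F η)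

theorem gaussian_product_integral_limit_general
    (n : ℕ) (c : ℝ) (hc : 0 < c)
    (g : Fin n → ℝ → ℝ)
    (hgm : ∀ j, Measurable (g j)) (hg0 : ∀ j t, 0 ≤ g j t)
    (hgb : ∀ j, ∃ B, ∀ t, g j t ≤ B)
    (A : ℕ → Matrix (Fin n) (Fin n) ℝ)
    (hAc : ∀ a b, Tendsto (fun p => A p a b) atTop
      (𝓝 ((c • (1 : Matrix (Fin n) (Fin n) ℝ)) a b))) :
    Tendsto (fun p => ∫ η : Fin n → ℝ, (∏ j, g j (η j)) * gaussDensity (A p) η)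
      atTop (𝓝 (∏ j, ∫ t : ℝ, g j t * gauss1 c t)) := by
  choose B hB using hgb
  have hlimit : ∏ j, ∫ t, g j t * gauss1 c t =
      ∫ η : Fin n → ℝ, (∏ j, g j (η j)) * gaussDensity (c • 1) η := by
    rw [← integral_fintype_prod_eq_prod]
    congr 1 with η
    rw [gaussDensity_smul_one hc, ← Finset.prod_mul_distrib]
  have hbound (η : Fin n → ℝ) : ‖∏ j, g j (η j)‖ ≤ ∏ j, B j := by
    rw [norm_prod]
    exact Finset.prod_le_prod (fun j _ => norm_nonneg _)
      fun j _ => (norm_of_nonneg (hg0 j _)).trans_le (hB j _)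
  rw [hlimit]
  exact tendsto_integral_mul_gaussDensity hc
    (Finset.measurable_prod _ fun j _ =>
      (hgm j).comp (measurable_pi_apply j)).aestronglyMeasurable
    hbound (tendsto_pi_nhds.2 fun a => tendsto_pi_nhds.2 (hAc a))

/-- **Dominated-convergence step of Theorem 4.** If `Aₚ → cIₙ` entrywise, then the
integral of a product of bounded nonnegative functions against the `N(0, Aₚ)` density
converges to the product of the univariate Gaussian integrals. -/
theorem gaussian_product_integral_limit
    (n : ℕ) (c : ℝ) (hc : 0 < c)
    (g : Fin n → ℝ → ℝ)
    (hgm : ∀ j, Measurable (g j)) (hg0 : ∀ j t, 0 ≤ g j t)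
    (hgb : ∀ j, ∃ B, ∀ t, g j t ≤ B)
    (A : ℕ → Matrix (Fin n) (Fin n) ℝ) (hA : ∀ p, (A p).PosDef)
    (hAc : ∀ a b, Tendsto (fun p => A p a b) atTop
      (𝓝 ((c • (1 : Matrix (Fin n) (Fin n) ℝ)) a b))) :
    Tendsto (fun p => ∫ η : Fin n → ℝ, (∏ j, g j (η j)) * gaussDensity (A p) η)
      atTop (𝓝 (∏ j, ∫ t : ℝ, g j t * gauss1 c t)) :=
  gaussian_product_integral_limit_general n c hc g hgm hg0 hgb A hAc
end

section
/- Fix n ≥ 2, τ > 0 and i ∈ {1,…,n}. Let g₁,…,gₙ : ℝ → [0,∞) be bounded measurable functions with 0 < ∫_ℝ gⱼ(t) dt < ∞ for every j. Let (s_p)_{p≥1} be positive reals with s_p → ∞, let (C_p)_{p≥1} be symmetric positive definite n×n real matrices with C_p → τ² I_n entrywise, and let (E_p)_{p≥1} be symmetric positive definite (n−1)×(n−1) real matrices with E_p → τ² I_{n−1} entrywise; set A_p = s_p C_p and D_p = s_p E_p. For a symmetric positive definite m×m matrix A, let φ_A(η) = (2π)^{-m/2}(det A)^{-1/2} exp(−½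 ηᵀA^{-1}η); integrals are with respect to Lebesgue measure. Then, as p → ∞, [∫_{ℝ^{n−1}} ∏_{j≠i} gⱼ(ηⱼ) φ_{D_p}(η₋ᵢ) dη₋ᵢ] · [∫_{ℝⁿ} gᵢ(ηᵢ) ∏_{j=1}^n gⱼ(ηⱼ) φ_{A_p}(η) dη] / [∫_{ℝⁿ} ∏_{j=1}^n gⱼ(ηⱼ) φ_{A_p}(η) dη]² → ∞, the denominator being strictly positive and finite for every p. -/
open MeasureTheory Matrix Filter Topology
open scoped ENNReal

/-! The three marginal likelihoods are Gaussian integrals of products of the `gⱼ`. The density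
`φ_A` is at most its normalising constant `(√((2π)ᵐ det A))⁻¹`, and on a box `[-R, R]ᵐ` at least
that constant times `exp (-R² ∑ |A⁻¹ₓᵧ| / 2)`, a factor tending to `1` because `(sₚ Cₚ)⁻¹ → 0`.
Choosing `R` so that every `gⱼ` has positive mass in `[-R, R]`, each integral is squeezed between
multiples of its normalising constant, so the ratio is at least a positive constant times
`√(2π sₚ det Cₚ / det Eₚ) → ∞`: the normalisations in dimensions `n - 1` and `n` do not cancel. -/

open Set

lemma dotProduct_mulVec_self_le {ι : Type*} [Fintype ι] (M : Matrix ι ι ℝ) {R : ℝ} (hR : 0 ≤ R)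
    {η : ι → ℝ} (hη : ∀ j, |η j| ≤ R) :
    η ⬝ᵥ M *ᵥ η ≤ R ^ 2 * ∑ x, ∑ y, |M x y| := by
  calc η ⬝ᵥ M *ᵥ η = ∑ x, ∑ y, η x * M x y * η y := by
        simp [dotProduct, mulVec, Finset.mul_sum, mul_assoc]
    _ ≤ ∑ x, ∑ y, R ^ 2 * |M x y| := by
        refine Finset.sum_le_sum fun x _ => Finset.sum_le_sum fun y _ => ?_
        calc η x * M x y * η y ≤ |η x| * |M x y| * |η y| := by
              rw [← abs_mul, ← abs_mul]; exact le_abs_self _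
          _ ≤ R * |M x y| * R := by gcongr <;> simp [hη]
          _ = R ^ 2 * |M x y| := by ring
    _ = R ^ 2 * ∑ x, ∑ y, |M x y| := by simp only [Finset.mul_sum]

section Gaussian

variable {n : ℕ} (A : Matrix (Fin n) (Fin n) ℝ)

noncomputable def gaussNormalizer : ℝ := (Real.sqrt ((2 * Real.pi) ^ n * A.det))⁻¹

lemma gaussNormalizer_pos (hA : 0 < A.det) : 0 < gaussNormalizer A :=
  inv_pos.2 (Real.sqrt_pos.2 (mul_pos (by positivity) hA))

lemma gaussDensity_le_gaussNormalizer (hA : A.PosSemidef) (η : Fin n → ℝ) :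
    gaussDensity A η ≤ gaussNormalizer A := by
  have hq : 0 ≤ η ⬝ᵥ A⁻¹ *ᵥ η := by simpa using hA.inv.dotProduct_mulVec_nonneg η
  refine mul_le_of_le_one_right (by positivity) (Real.exp_le_one_iff.2 ?_)
  linarith

lemma gaussNormalizer_mul_exp_le_gaussDensity {R : ℝ} (hR : 0 ≤ R) {η : Fin n → ℝ}
    (hη : ∀ j, |η j| ≤ R) :
    gaussNormalizer A * Real.exp (-(R ^ 2 * ∑ x, ∑ y, |A⁻¹ x y|) / 2) ≤ gaussDensity A η := by
  have hq := dotProduct_mulVec_self_le A⁻¹ hR hη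
  unfold gaussDensity gaussNormalizer
  gcongr

end Gaussian

lemma lintegral_pi_prod {α : Type*} [MeasurableSpace α] (μ : Measure α) [SigmaFinite μ] :
    ∀ {n : ℕ} (f : Fin n → α → ℝ≥0∞), (∀ i, Measurable (f i)) →
      ∫⁻ x, ∏ i, f i (x i) ∂Measure.pi (fun _ => μ) = ∏ i, ∫⁻ t, f i t ∂μ
  | 0, f, _ => by simp [Measure.pi_empty_univ]
  | n + 1, f, hf => by
    rw [← ((measurePreserving_piFinSuccAbove (fun _ => μ) 0).symm).lintegral_comp_emb
      (MeasurableEquiv.measurableEmbedding _)]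
    simp_rw [MeasurableEquiv.piFinSuccAbove_symm_apply, Fin.insertNthEquiv,
      Fin.prod_univ_succ, Fin.insertNth_zero]
    simp only [cast_eq, Fin.cons_zero, Fin.cons_succ, Equiv.coe_fn_mk]
    rw [lintegral_prod_mul (f := f 0) (g := fun y : Fin n → α => ∏ i, f i.succ (y i))
      (hf 0).aemeasurable
      (Finset.measurable_prod _ fun i _ => (hf i.succ).comp (measurable_pi_apply i)).aemeasurable,
      lintegral_pi_prod μ (fun i => f i.succ) fun i => hf i.succ]

section GaussianIntegral

variable {n : ℕ} {f : Fin n → ℝ → ℝ}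

lemma lintegral_prod_mul_gaussDensity_le {A : Matrix (Fin n) (Fin n) ℝ} (hA : A.PosSemidef)
    (hf : ∀ j, Measurable (f j)) (hf0 : ∀ j t, 0 ≤ f j t) :
    ∫⁻ η, ENNReal.ofReal ((∏ j, f j (η j)) * gaussDensity A η)
      ≤ ENNReal.ofReal (gaussNormalizer A) * ∏ j, ∫⁻ t, ENNReal.ofReal (f j t) := by
  calc ∫⁻ η : Fin n → ℝ, ENNReal.ofReal ((∏ j, f j (η j)) * gaussDensity A η)
      ≤ ∫⁻ η : Fin n → ℝ,
          (∏ j, ENNReal.ofReal (f j (η j))) * ENNReal.ofReal (gaussNormalizer A) := by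
        refine lintegral_mono fun η => ?_
        rw [← ENNReal.ofReal_prod_of_nonneg fun j _ => hf0 j _,
          ← ENNReal.ofReal_mul (Finset.prod_nonneg fun j _ => hf0 j _)]
        exact ENNReal.ofReal_le_ofReal (mul_le_mul_of_nonneg_left
          (gaussDensity_le_gaussNormalizer A hA η) (Finset.prod_nonneg fun j _ => hf0 j _))
    _ = _ := by
        rw [lintegral_mul_const' _ _ ENNReal.ofReal_ne_top, volume_pi,
          lintegral_pi_prod _ _ fun j => (hf j).ennreal_ofReal, mul_comm]

lemma le_lintegral_prod_mul_gaussDensity (A : Matrix (Fin n) (Fin n) ℝ)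
    (hf : ∀ j, Measurable (f j)) (hf0 : ∀ j t, 0 ≤ f j t) {R : ℝ} (hR : 0 ≤ R) :
    ENNReal.ofReal (gaussNormalizer A * Real.exp (-(R ^ 2 * ∑ x, ∑ y, |A⁻¹ x y|) / 2)) *
        ∏ j, ∫⁻ t in Icc (-R) R, ENNReal.ofReal (f j t)
      ≤ ∫⁻ η, ENNReal.ofReal ((∏ j, f j (η j)) * gaussDensity A η) := by
  simp_rw [← lintegral_indicator measurableSet_Icc]
  rw [← lintegral_pi_prod _ _ fun j => (hf j).ennreal_ofReal.indicator measurableSet_Icc,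
    ← volume_pi, ← lintegral_const_mul' _ _ ENNReal.ofReal_ne_top]
  refine lintegral_mono fun η => ?_
  by_cases hη : ∀ j, η j ∈ Icc (-R) R
  · simp only [indicator_of_mem (hη _)]
    rw [← ENNReal.ofReal_prod_of_nonneg fun j _ => hf0 j _, ← ENNReal.ofReal_mul, mul_comm]
    · gcongr
      · exact Finset.prod_nonneg fun j _ => hf0 j _
      · exact gaussNormalizer_mul_exp_le_gaussDensity A hR fun j => abs_le.2 (hη j)
    · unfold gaussNormalizer; positivity
  · obtain ⟨j, hj⟩ := not_forall.1 hη
    rw [Finset.prod_eq_zero (Finset.mem_univ j) (indicator_of_notMem hj _), mul_zero]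
    exact zero_le

end GaussianIntegral

lemma eventually_pos_setLIntegral_Icc {f : ℝ → ℝ≥0∞} (hf : 0 < ∫⁻ t, f t) :
    ∀ᶠ R in atTop, 0 < ∫⁻ t in Icc (-R) R, f t := by
  obtain ⟨N, hN⟩ : ∃ N : ℕ, 0 < ∫⁻ t in Icc (-N : ℝ) N, f t := by
    by_contra! h
    have hcover : (⋃ N : ℕ, Icc (-N : ℝ) N) = univ :=
      eq_univ_of_forall fun t => mem_iUnion.2 (by
        obtain ⟨N, hN⟩ := exists_nat_ge |t|; exact ⟨N, abs_le.1 hN⟩)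
    refine hf.ne' (le_antisymm ?_ zero_le)
    calc ∫⁻ t, f t = ∫⁻ t in ⋃ N : ℕ, Icc (-N : ℝ) N, f t := by rw [hcover, Measure.restrict_univ]
      _ ≤ ∑' N : ℕ, ∫⁻ t in Icc (-N : ℝ) N, f t := lintegral_iUnion_le _ _
      _ = 0 := by simp [fun N => le_antisymm (h N) zero_le]
  filter_upwards [eventually_ge_atTop (N : ℝ)] with R hR
  exact hN.trans_le (lintegral_mono_set (Icc_subset_Icc (neg_le_neg hR) hR))

lemma setLIntegral_mul_self_pos_iff {α : Type*} [MeasurableSpace α] {μ : Measure α}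
    {f : α → ℝ≥0∞} (hf : Measurable f) {s : Set α} :
    0 < ∫⁻ t in s, f t * f t ∂μ ↔ 0 < ∫⁻ t in s, f t ∂μ := by
  change 0 < ∫⁻ t in s, (f * f) t ∂μ ↔ _
  rw [setLIntegral_pos_iff (hf.mul hf), setLIntegral_pos_iff hf]
  simp

section SquareAt

variable {n : ℕ} (f : Fin n → ℝ → ℝ) (i : Fin n)

def squareAt : Fin n → ℝ → ℝ := fun j t => (if j = i then f j t else 1) * f j t

lemma mul_prod_eq_prod_squareAt (η : Fin n → ℝ) :
    f i (η i) * ∏ j, f j (η j) = ∏ j, squareAt f i j (η j) := by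
  simp only [squareAt, Finset.prod_mul_distrib, Finset.prod_ite_eq', Finset.mem_univ, if_true]

variable {f}

lemma measurable_squareAt (hf : ∀ j, Measurable (f j)) (j : Fin n) :
    Measurable (squareAt f i j) := by
  refine Measurable.mul ?_ (hf j); split_ifs; exacts [hf j, measurable_const]

lemma squareAt_nonneg (hf0 : ∀ j t, 0 ≤ f j t) (j : Fin n) (t : ℝ) : 0 ≤ squareAt f i j t :=
  mul_nonneg (by split_ifs; exacts [hf0 j t, zero_le_one]) (hf0 j t)

lemma setLIntegral_ofReal_squareAt_pos (hf : ∀ j, Measurable (f j)) (hf0 : ∀ j t, 0 ≤ f j t)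
    {s : Set ℝ} {j : Fin n} (hpos : 0 < ∫⁻ t in s, ENNReal.ofReal (f j t)) :
    0 < ∫⁻ t in s, ENNReal.ofReal (squareAt f i j t) := by
  by_cases h : j = i
  · simp only [squareAt, h, if_true, ENNReal.ofReal_mul (hf0 _ _)]
    exact (setLIntegral_mul_self_pos_iff (hf i).ennreal_ofReal).2 (h ▸ hpos)
  · simpa [squareAt, h] using hpos

end SquareAt

section Asymptotics

variable {α ι : Type*} [Fintype ι] [DecidableEq ι] {l : Filter α} {s : α → ℝ}

lemma tendsto_inv_smul_nhds_zero {C : α → Matrix ι ι ℝ} {L : Matrix ι ι ℝ}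
    (hs : Tendsto s l atTop) (hC : Tendsto C l (𝓝 L)) (hL : L.det ≠ 0) :
    Tendsto (fun p => (s p • C p)⁻¹) l (𝓝 0) := by
  have hinv : Tendsto (fun p => (C p)⁻¹) l (𝓝 L⁻¹) := by
    refine (continuousAt_matrix_inv L ?_).tendsto.comp hC
    simpa only [Ring.inverse_eq_inv'] using continuousAt_inv₀ hL
  have hdet : ∀ᶠ p in l, (C p).det ≠ 0 :=
    ((continuous_id.matrix_det.tendsto L).comp hC).eventually_ne hL
  have hlim := (tendsto_inv_atTop_zero.comp hs).smul hinv
  rw [zero_smul] at hlim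
  refine hlim.congr' ?_
  filter_upwards [hdet, hs.eventually_ne_atTop 0] with p hp hsp
  refine (inv_eq_left_inv ?_).symm
  rw [Function.comp_apply, smul_mul_smul_comm, inv_mul_cancel₀ hsp,
    nonsing_inv_mul _ hp.isUnit, one_smul]

lemma tendsto_exp_neg_sum_abs_inv_smul (R : ℝ) {C : α → Matrix ι ι ℝ} {L : Matrix ι ι ℝ}
    (hs : Tendsto s l atTop) (hC : Tendsto C l (𝓝 L)) (hL : L.det ≠ 0) :
    Tendsto (fun p => Real.exp (-(R ^ 2 * ∑ x, ∑ y, |(s p • C p)⁻¹ x y|) / 2)) l (𝓝 1) := by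
  have hcont : Continuous fun M : Matrix ι ι ℝ => Real.exp (-(R ^ 2 * ∑ x, ∑ y, |M x y|) / 2) := by
    fun_prop
  simpa [Function.comp_def] using (hcont.tendsto 0).comp (tendsto_inv_smul_nhds_zero hs hC hL)

variable {m : ℕ} {E : α → Matrix (Fin m) (Fin m) ℝ} {C : α → Matrix (Fin (m + 1)) (Fin (m + 1)) ℝ}
  {L₁ : Matrix (Fin m) (Fin m) ℝ} {L₂ : Matrix (Fin (m + 1)) (Fin (m + 1)) ℝ}

lemma tendsto_gaussNormalizer_smul_div (hs : Tendsto s l atTop) (hE : Tendsto E l (𝓝 L₁))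
    (hC : Tendsto C l (𝓝 L₂)) (h₁ : 0 < L₁.det) (h₂ : 0 < L₂.det) :
    Tendsto (fun p => gaussNormalizer (s p • E p) / gaussNormalizer (s p • C p)) l atTop := by
  have hdetE := (continuous_id.matrix_det.tendsto L₁).comp hE
  have hdetC := (continuous_id.matrix_det.tendsto L₂).comp hC
  have hq : Tendsto (fun p => 2 * Real.pi * s p * ((C p).det / (E p).det)) l atTop :=
    (hs.const_mul_atTop (by positivity)).atTop_mul_pos (div_pos h₂ h₁) (hdetC.div hdetE h₁.ne')
  refine (Real.tendsto_sqrt_atTop.comp hq).congr' ?_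
  filter_upwards [hs.eventually_gt_atTop 0, hdetE.eventually (lt_mem_nhds h₁)] with p hsp hEp
  simp only [Function.comp_apply, gaussNormalizer, det_smul, Fintype.card_fin, inv_div_inv]
  rw [← Real.sqrt_div' _ (by positivity)]
  congr 1
  field_simp
  ring

lemma tendsto_gaussNormalizer_mul_exp_ratio (R : ℝ) (hs : Tendsto s l atTop)
    (hE : Tendsto E l (𝓝 L₁)) (hC : Tendsto C l (𝓝 L₂)) (h₁ : 0 < L₁.det) (h₂ : 0 < L₂.det) :
    Tendsto (fun p =>
      gaussNormalizer (s p • E p) * Real.exp (-(R ^ 2 * ∑ x, ∑ y, |(s p • E p)⁻¹ x y|) / 2) *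
        (gaussNormalizer (s p • C p) * Real.exp (-(R ^ 2 * ∑ x, ∑ y, |(s p • C p)⁻¹ x y|) / 2)) /
        gaussNormalizer (s p • C p) ^ 2) l atTop := by
  have hexp := (tendsto_exp_neg_sum_abs_inv_smul R hs hE h₁.ne').mul
    (tendsto_exp_neg_sum_abs_inv_smul R hs hC h₂.ne')
  refine ((tendsto_gaussNormalizer_smul_div hs hE hC h₁ h₂).atTop_mul_pos (by norm_num)
    hexp).congr' ?_
  filter_upwards [hs.eventually_gt_atTop 0,
    ((continuous_id.matrix_det.tendsto L₂).comp hC).eventually (lt_mem_nhds h₂)] with p hsp hCp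
  have := (gaussNormalizer_pos (s p • C p) (by rw [det_smul]; positivity)).ne'
  field_simp

end Asymptotics

lemma tendsto_mul_div_sq_nhds_top {α : Type*} {l : Filter α} {N₁ N₂ D : α → ℝ≥0∞}
    {x y z : α → ℝ} {k₁ k₂ K : ℝ≥0∞} (hx : ∀ p, 0 ≤ x p) (hz : ∀ p, 0 < z p)
    (hk₁ : k₁ ≠ 0) (hk₂ : k₂ ≠ 0) (hK : K ≠ ⊤)
    (hN₁ : ∀ p, ENNReal.ofReal (x p) * k₁ ≤ N₁ p) (hN₂ : ∀ p, ENNReal.ofReal (y p) * k₂ ≤ N₂ p)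
    (hD : ∀ p, D p ≤ ENNReal.ofReal (z p) * K)
    (hxyz : Tendsto (fun p => x p * y p / z p ^ 2) l atTop) :
    Tendsto (fun p => N₁ p * N₂ p / D p ^ 2) l (𝓝 ⊤) := by
  have hk : k₁ * k₂ / K ^ 2 ≠ 0 :=
    ENNReal.div_ne_zero.2 ⟨mul_ne_zero hk₁ hk₂, ENNReal.pow_ne_top hK⟩
  refine tendsto_nhds_top_mono
    (f := fun p => ENNReal.ofReal (x p * y p / z p ^ 2) * (k₁ * k₂ / K ^ 2)) ?_
    (Eventually.of_forall fun p => ?_)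
  · rw [← ENNReal.top_mul hk]
    exact ENNReal.Tendsto.mul_const (ENNReal.tendsto_ofReal_atTop.comp hxyz)
      (Or.inl ENNReal.top_ne_zero)
  calc ENNReal.ofReal (x p * y p / z p ^ 2) * (k₁ * k₂ / K ^ 2)
      = ENNReal.ofReal (x p) * k₁ * (ENNReal.ofReal (y p) * k₂) /
          (ENNReal.ofReal (z p) * K) ^ 2 := by
        rw [ENNReal.ofReal_div_of_pos (by positivity [hz p]), ENNReal.ofReal_mul (hx p),
          ENNReal.ofReal_pow (hz p).le, mul_pow, ← ENNReal.mul_div_mul_comm, mul_mul_mul_comm]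
        · simp [hz p]
        · simp
    _ ≤ N₁ p * N₂ p / D p ^ 2 := by gcongr <;> simp only [hN₁, hN₂, hD]

theorem av_loo_diverges_general
    (m : ℕ) (τ : ℝ) (hτ : 0 < τ) (i : Fin (m + 1))
    (g : Fin (m + 1) → ℝ → ℝ)
    (hgm : ∀ j, Measurable (g j)) (hg0 : ∀ j t, 0 ≤ g j t)
    (hgint : ∀ j, 0 < (∫⁻ t : ℝ, ENNReal.ofReal (g j t)) ∧
      (∫⁻ t : ℝ, ENNReal.ofReal (g j t)) < ⊤)
    (s : ℕ → ℝ) (hs : ∀ p, 0 < s p) (hsdiv : Tendsto s atTop atTop)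
    (C : ℕ → Matrix (Fin (m + 1)) (Fin (m + 1)) ℝ) (hC : ∀ p, (C p).PosDef)
    (hCc : ∀ x y, Tendsto (fun p => C p x y) atTop
      (𝓝 ((τ ^ 2 • (1 : Matrix (Fin (m + 1)) (Fin (m + 1)) ℝ)) x y)))
    (E : ℕ → Matrix (Fin m) (Fin m) ℝ) (hE : ∀ p, (E p).PosDef)
    (hEc : ∀ x y, Tendsto (fun p => E p x y) atTop
      (𝓝 ((τ ^ 2 • (1 : Matrix (Fin m) (Fin m) ℝ)) x y))) :
    (∀ p, 0 < (∫⁻ η : Fin (m + 1) → ℝ,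
        ENNReal.ofReal ((∏ j, g j (η j)) * gaussDensity (s p • C p) η)) ∧
      (∫⁻ η : Fin (m + 1) → ℝ,
        ENNReal.ofReal ((∏ j, g j (η j)) * gaussDensity (s p • C p) η)) < ⊤) ∧
    Tendsto (fun p =>
        (∫⁻ η : Fin m → ℝ,
          ENNReal.ofReal ((∏ k, g (i.succAbove k) (η k)) * gaussDensity (s p • E p) η)) *
        (∫⁻ η : Fin (m + 1) → ℝ,
          ENNReal.ofReal (g i (η i) * (∏ j, g j (η j)) * gaussDensity (s p • C p) η)) /
        (∫⁻ η : Fin (m + 1) → ℝ,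
          ENNReal.ofReal ((∏ j, g j (η j)) * gaussDensity (s p • C p) η)) ^ 2)
      atTop (𝓝 (⊤ : ℝ≥0∞)) := by
  obtain ⟨R, hR, hpos⟩ : ∃ R : ℝ, 0 ≤ R ∧ ∀ j, 0 < ∫⁻ t in Icc (-R) R, ENNReal.ofReal (g j t) :=
    ((eventually_ge_atTop 0).and
      (eventually_all.2 fun j => eventually_pos_setLIntegral_Icc (hgint j).1)).exists
  have hdet_pos (n : ℕ) : 0 < (τ ^ 2 • (1 : Matrix (Fin n) (Fin n) ℝ)).det := by
    simp only [det_smul, det_one, Fintype.card_fin, mul_one]; positivity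
  have hCdet (p) : 0 < (s p • C p).det := ((hC p).smul (hs p)).det_pos
  have hD_le (p) := lintegral_prod_mul_gaussDensity_le ((hC p).smul (hs p)).posSemidef hgm hg0
  have hD_ge (p) := le_lintegral_prod_mul_gaussDensity (s p • C p) hgm hg0 hR
  have hK : ∏ j, ∫⁻ t, ENNReal.ofReal (g j t) ≠ ⊤ := ENNReal.prod_ne_top fun j _ => (hgint j).2.ne
  refine ⟨fun p => ⟨(hD_ge p).trans_lt' ?_, (hD_le p).trans_lt ?_⟩, ?_⟩
  · refine ENNReal.mul_pos (ENNReal.ofReal_pos.2 ?_).ne'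
      (CanonicallyOrderedAdd.prod_pos.2 fun j _ => hpos j).ne'
    positivity [gaussNormalizer_pos _ (hCdet p)]
  · exact ENNReal.mul_lt_top ENNReal.ofReal_lt_top hK.lt_top
  refine tendsto_mul_div_sq_nhds_top
    (fun p => by positivity [gaussNormalizer_pos _ ((hE p).smul (hs p)).det_pos])
    (fun p => gaussNormalizer_pos _ (hCdet p))
    (CanonicallyOrderedAdd.prod_pos.2 fun k _ => hpos _).ne'
    (CanonicallyOrderedAdd.prod_pos.2 fun j _ =>
      setLIntegral_ofReal_squareAt_pos i hgm hg0 (hpos j)).ne' hK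
    (fun p => le_lintegral_prod_mul_gaussDensity (s p • E p) (fun k => hgm _) (fun k => hg0 _) hR)
    (fun p => by
      simpa only [mul_prod_eq_prod_squareAt] using le_lintegral_prod_mul_gaussDensity (s p • C p)
        (measurable_squareAt i hgm) (squareAt_nonneg i hg0) hR)
    hD_le ?_
  exact tendsto_gaussNormalizer_mul_exp_ratio R hsdiv
    (tendsto_pi_nhds.2 fun x => tendsto_pi_nhds.2 (hEc x))
    (tendsto_pi_nhds.2 fun x => tendsto_pi_nhds.2 (hCc x)) (hdet_pos m) (hdet_pos (m + 1))

/-- **Theorem 5(a), deterministic form.** For bounded, integrable likelihood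
contributions `gⱼ` with positive integrals, diverging scales `sₚ → ∞` and
`Cₚ → τ²Iₙ`, `Eₚ → τ²I_{n−1}` entrywise, the quantity
`p(y₋ᵢ)·∫ gᵢ∏gⱼ dN(0,Aₚ) / p(y)²` (whose denominator is strictly positive and
finite for every `p`) diverges to `∞` as `p → ∞`. Here `n = m + 1 ≥ 2`. -/
theorem av_loo_diverges
    (m : ℕ) (hm : 1 ≤ m) (τ : ℝ) (hτ : 0 < τ) (i : Fin (m + 1))
    (g : Fin (m + 1) → ℝ → ℝ)
    (hgm : ∀ j, Measurable (g j)) (hg0 : ∀ j t, 0 ≤ g j t)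
    (hgb : ∀ j, ∃ B, ∀ t, g j t ≤ B)
    (hgint : ∀ j, 0 < (∫⁻ t : ℝ, ENNReal.ofReal (g j t)) ∧
      (∫⁻ t : ℝ, ENNReal.ofReal (g j t)) < ⊤)
    (s : ℕ → ℝ) (hs : ∀ p, 0 < s p) (hsdiv : Tendsto s atTop atTop)
    (C : ℕ → Matrix (Fin (m + 1)) (Fin (m + 1)) ℝ) (hC : ∀ p, (C p).PosDef)
    (hCc : ∀ x y, Tendsto (fun p => C p x y) atTop
      (𝓝 ((τ ^ 2 • (1 : Matrix (Fin (m + 1)) (Fin (m + 1)) ℝ)) x y)))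
    (E : ℕ → Matrix (Fin m) (Fin m) ℝ) (hE : ∀ p, (E p).PosDef)
    (hEc : ∀ x y, Tendsto (fun p => E p x y) atTop
      (𝓝 ((τ ^ 2 • (1 : Matrix (Fin m) (Fin m) ℝ)) x y))) :
    (∀ p, 0 < (∫⁻ η : Fin (m + 1) → ℝ,
        ENNReal.ofReal ((∏ j, g j (η j)) * gaussDensity (s p • C p) η)) ∧
      (∫⁻ η : Fin (m + 1) → ℝ,
        ENNReal.ofReal ((∏ j, g j (η j)) * gaussDensity (s p • C p) η)) < ⊤) ∧
    Tendsto (fun p =>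
        (∫⁻ η : Fin m → ℝ,
          ENNReal.ofReal ((∏ k, g (i.succAbove k) (η k)) * gaussDensity (s p • E p) η)) *
        (∫⁻ η : Fin (m + 1) → ℝ,
          ENNReal.ofReal (g i (η i) * (∏ j, g j (η j)) * gaussDensity (s p • C p) η)) /
        (∫⁻ η : Fin (m + 1) → ℝ,
          ENNReal.ofReal ((∏ j, g j (η j)) * gaussDensity (s p • C p) η)) ^ 2)
      atTop (𝓝 (⊤ : ℝ≥0∞)) :=
  av_loo_diverges_general m τ hτ i g hgm hg0 hgint s hs hsdiv C hC hCc E hE hEc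
end

section
/- Fix n ≥ 1, τ > 0 and i ∈ {1,…,n}. Let g₁,…,gₙ : ℝ → (0,∞) be bounded measurable functions such that for every j the limits aⱼ = lim_{t→−∞} gⱼ(t) and bⱼ = lim_{t→+∞} gⱼ(t) exist in [0,∞) with aⱼ + bⱼ > 0, and assume aᵢ bᵢ = 0 (i.e. gᵢ vanishes in at least one direction). Let (s_p)_{p≥1} be positive reals with s_p → ∞, and let (B_p)_{p≥1} be symmetric positive definite n×n real matrices with B_p → τ² I_n entrywise; set A_p = s_p B_p. For a symmetric positive definite n×n matrix A, let φ_A(η) = (2π)^{-n/2}(det A)^{-1/2} exp(−½ ηᵀA^{-1}η); integrals are with respect to Lebesgue measure. Then ∫_{ℝⁿ} gᵢ(ηᵢ)^{-1} ∏_{j≠i} gⱼ(ηⱼ) φ_{A_p}(η) dη → ∞ as p → ∞. -/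
open MeasureTheory Matrix Filter Topology Finset
open scoped ENNReal

lemma Matrix.dotProduct_mulVec_le_sq_mul_sum_abs {ι : Type*} [Fintype ι]
    (M : Matrix ι ι ℝ) {η : ι → ℝ} {R : ℝ} (hη : ∀ j, |η j| ≤ R) :
    η ⬝ᵥ M *ᵥ η ≤ R ^ 2 * ∑ j, ∑ k, |M j k| := by
  simp only [dotProduct, mulVec, Finset.mul_sum]
  refine sum_le_sum fun j _ => sum_le_sum fun k _ => ?_
  have hR : 0 ≤ R := (abs_nonneg _).trans (hη j)
  calc η j * (M j k * η k) ≤ |η j| * (|M j k| * |η k|) := by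
        simpa only [abs_mul] using le_abs_self (η j * (M j k * η k))
    _ ≤ R * (|M j k| * R) := by gcongr <;> exact hη _
    _ = R ^ 2 * |M j k| := by ring

lemma Matrix.exists_eventually_sum_abs_inv_le {α ι : Type*} [Fintype ι] [DecidableEq ι]
    {l : Filter α} {B : α → Matrix ι ι ℝ} {M : Matrix ι ι ℝ} (hB : Tendsto B l (𝓝 M))
    (hM : M.det ≠ 0) : ∃ C, ∀ᶠ p in l, ∑ j, ∑ k, |(B p)⁻¹ j k| ≤ C := by
  have hinv : Tendsto (fun p => (B p)⁻¹) l (𝓝 M⁻¹) :=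
    (continuousAt_matrix_inv M (NormedRing.inverse_continuousAt (Units.mk0 _ hM))).tendsto.comp hB
  have hsum : Continuous fun A : Matrix ι ι ℝ => ∑ j, ∑ k, |A j k| := by fun_prop
  exact ((hsum.tendsto _).comp hinv).isBoundedUnder_le.eventually_le

lemma gaussDensity_smul_ge {m : ℕ} {B : Matrix (Fin m) (Fin m) ℝ} {D C R s : ℝ}
    (hdet : 0 < B.det) (hD : B.det ≤ D) (hC : ∑ j, ∑ k, |B⁻¹ j k| ≤ C) (hs : 0 < s)
    {η : Fin m → ℝ} (hη : ∀ j, |η j| ≤ R * √s) :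
    (√((2 * Real.pi) ^ m * D))⁻¹ * Real.exp (-(R ^ 2 * C) / 2) / √s ^ m ≤
      gaussDensity (s • B) η := by
  have : Invertible s := invertibleOfNonzero hs.ne'
  have hsqrt_pow : √(s ^ m) = √s ^ m := by
    rw [← Real.sqrt_sq (pow_nonneg (Real.sqrt_nonneg s) m), ← pow_mul, mul_comm, pow_mul,
      Real.sq_sqrt hs.le]
  have hnorm : √((2 * Real.pi) ^ m * (s • B).det) ≤ √s ^ m * √((2 * Real.pi) ^ m * D) := by
    rw [det_smul, Fintype.card_fin, mul_left_comm, Real.sqrt_mul (by positivity), hsqrt_pow]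
    gcongr
  have hquad : η ⬝ᵥ (s • B)⁻¹ *ᵥ η ≤ R ^ 2 * C := by
    rw [inv_smul _ _ hdet.ne'.isUnit, smul_mulVec, dotProduct_smul, invOf_eq_inv, smul_eq_mul]
    calc s⁻¹ * (η ⬝ᵥ B⁻¹ *ᵥ η) ≤ s⁻¹ * ((R * √s) ^ 2 * C) := by
          gcongr
          exact dotProduct_mulVec_le_sq_mul_sum_abs _ hη |>.trans (by gcongr)
      _ = R ^ 2 * C := by
          rw [mul_pow, Real.sq_sqrt hs.le]
          field_simp
  have hpos : 0 < √((2 * Real.pi) ^ m * (s • B).det) := by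
    rw [det_smul]
    positivity
  calc _ = (√s ^ m * √((2 * Real.pi) ^ m * D))⁻¹ * Real.exp (-(R ^ 2 * C) / 2) := by
        rw [mul_inv]; ring
    _ ≤ gaussDensity (s • B) η := by
        unfold gaussDensity
        gcongr

lemma exists_eventually_gaussDensity_smul_ge {α : Type*} {l : Filter α} {m : ℕ}
    {B : α → Matrix (Fin m) (Fin m) ℝ} {M : Matrix (Fin m) (Fin m) ℝ}
    (hB : Tendsto B l (𝓝 M)) (hM : 0 < M.det) (R : ℝ) :
    ∃ κ > 0, ∀ᶠ p in l, ∀ s > 0, ∀ η : Fin m → ℝ, (∀ j, |η j| ≤ R * √s) →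
      κ / √s ^ m ≤ gaussDensity (s • B p) η := by
  have hdet : Tendsto (fun p => (B p).det) l (𝓝 M.det) :=
    (continuous_id.matrix_det.tendsto M).comp hB
  obtain ⟨C, hC⟩ := exists_eventually_sum_abs_inv_le hB hM.ne'
  refine ⟨(√((2 * Real.pi) ^ m * (M.det + 1)))⁻¹ * Real.exp (-(R ^ 2 * C) / 2),
    by positivity, ?_⟩
  filter_upwards [hdet.eventually (lt_mem_nhds hM),
    hdet.eventually (eventually_le_nhds (lt_add_one _)), hC] with p hpos hD hC s hs η hη
  exact gaussDensity_smul_ge hpos hD hC hs hη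

lemma ofReal_le_lintegral_of_le_on_box {ι : Type*} [Fintype ι] {σ : ι → ℝ}
    (hσ : ∀ j, |σ j| = 1) {r : ℝ} (hr : 0 < r) (c : ℝ) {F : (ι → ℝ) → ℝ}
    (hF : ∀ η, (∀ j, r ≤ σ j * η j ∧ |η j| ≤ 2 * r) → c / r ^ Fintype.card ι ≤ F η) :
    ENNReal.ofReal c ≤ ∫⁻ η, ENNReal.ofReal (F η) := by
  set S : Set (ι → ℝ) := Set.univ.pi fun j => (σ j * ·) ⁻¹' Set.Icc r (2 * r)
  have hS : MeasurableSet S :=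
    MeasurableSet.univ_pi fun j => measurableSet_Icc.preimage (measurable_const_mul _)
  have hσ0 : ∀ j, σ j ≠ 0 := fun j h => by simpa [h] using hσ j
  have hvol : volume S = ENNReal.ofReal (r ^ Fintype.card ι) := by
    simp only [S, volume_pi_pi, Real.volume_preimage_mul_left (hσ0 _), abs_inv, hσ,
      inv_one, ENNReal.ofReal_one, one_mul, Real.volume_Icc, prod_const, card_univ]
    rw [two_mul, add_sub_cancel_right, ENNReal.ofReal_pow hr.le]
  have hbox : ∀ η ∈ S, ∀ j, r ≤ σ j * η j ∧ |η j| ≤ 2 * r := fun η hη j => by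
    obtain ⟨h₁, h₂⟩ := hη j (Set.mem_univ j)
    refine ⟨h₁, ?_⟩
    rw [← one_mul |η j|, ← hσ j, ← abs_mul, abs_le]
    constructor <;> linarith
  calc ENNReal.ofReal c = ∫⁻ _ in S, ENNReal.ofReal (c / r ^ Fintype.card ι) := by
        rw [setLIntegral_const, hvol, ← ENNReal.ofReal_mul' (by positivity),
          div_mul_cancel₀ _ (by positivity)]
    _ ≤ ∫⁻ η in S, ENNReal.ofReal (F η) :=
        setLIntegral_mono' hS fun η hη => ENNReal.ofReal_le_ofReal (hF η (hbox η hη))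
    _ ≤ ∫⁻ η, ENNReal.ofReal (F η) := setLIntegral_le_lintegral _ _

lemma exists_sign_tendsto_comp_mul {f : ℝ → ℝ} {a b : ℝ} (ha : Tendsto f atBot (𝓝 a))
    (hb : Tendsto f atTop (𝓝 b)) {P : ℝ → Prop} (hP : P a ∨ P b) :
    ∃ σ : ℝ, |σ| = 1 ∧ ∃ l, P l ∧ Tendsto (fun t => f (σ * t)) atTop (𝓝 l) := by
  rcases hP with hPa | hPb
  · exact ⟨-1, by simp, a, hPa, (ha.comp tendsto_neg_atTop_atBot).congr fun t => by simp⟩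
  · exact ⟨1, by simp, b, hPb, by simpa using hb⟩

lemma exists_sign_eventually_le_inv_mul_prod {n : ℕ} (i : Fin n) {g : Fin n → ℝ → ℝ}
    (hgi : ∀ t, 0 < g i t) {a b : Fin n → ℝ}
    (ha : ∀ j, Tendsto (g j) atBot (𝓝 (a j))) (hb : ∀ j, Tendsto (g j) atTop (𝓝 (b j)))
    (hab : ∀ j ≠ i, 0 < a j + b j) (hi : a i * b i = 0) :
    ∃ σ : Fin n → ℝ, (∀ j, |σ j| = 1) ∧ ∀ K, ∀ᶠ t in atTop, ∀ x : Fin n → ℝ,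
      (∀ j, t ≤ σ j * x j) → K ≤ (g i (x i))⁻¹ * ∏ j ∈ univ.erase i, g j (x j) := by
  classical
  have hdir : ∀ j, ∃ σ : ℝ, |σ| = 1 ∧ ∃ l, (if j = i then l = 0 else 0 < l) ∧
      Tendsto (fun t => g j (σ * t)) atTop (𝓝 l) := fun j => by
    refine exists_sign_tendsto_comp_mul (ha j) (hb j) ?_
    split_ifs with hj
    · exact mul_eq_zero.1 (hj ▸ hi)
    · by_contra! h
      linarith [hab j hj]
  choose σ hσ l hl hlim using hdir
  refine ⟨σ, hσ, fun K => ?_⟩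
  set c := ∏ j ∈ univ.erase i, l j / 2
  have hlpos : ∀ j ∈ univ.erase i, 0 < l j := fun j hj => by
    simpa [if_neg (ne_of_mem_erase hj)] using hl j
  have hc : 0 < c := prod_pos fun j hj => half_pos (hlpos j hj)
  have hinv : Tendsto (fun t => (g i (σ i * t))⁻¹) atTop atTop := by
    refine tendsto_inv_nhdsGT_zero.comp (tendsto_nhdsWithin_iff.2 ⟨?_, .of_forall fun t => hgi _⟩)
    simpa [show l i = 0 by simpa using hl i] using hlim i
  have hfar : ∀ᶠ u in atTop, max K 0 / c ≤ (g i (σ i * u))⁻¹ ∧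
      ∀ j ∈ univ.erase i, l j / 2 ≤ g j (σ j * u) :=
    (hinv.eventually_ge_atTop _).and <| (eventually_all_finset _).2 fun j hj =>
      (hlim j).eventually (eventually_ge_nhds (half_lt_self (hlpos j hj)))
  obtain ⟨T, hT⟩ := eventually_atTop.1 hfar
  filter_upwards [eventually_ge_atTop T] with t ht x hx
  have hxσ : ∀ j, x j = σ j * (σ j * x j) := fun j => by
    rw [← mul_assoc, ← sq, ← sq_abs, hσ j, one_pow, one_mul]
  have hxT : ∀ j, T ≤ σ j * x j := fun j => ht.trans (hx j)
  have hprod : c ≤ ∏ j ∈ univ.erase i, g j (x j) :=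
    prod_le_prod (fun j hj => (half_pos (hlpos j hj)).le)
      fun j hj => hxσ j ▸ (hT _ (hxT j)).2 j hj
  calc K ≤ max K 0 / c * c := by rw [div_mul_cancel₀ _ hc.ne']; exact le_max_left _ _
    _ ≤ (g i (x i))⁻¹ * ∏ j ∈ univ.erase i, g j (x j) := by
        gcongr
        · exact (inv_pos.2 (hgi _)).le
        · exact hxσ i ▸ (hT _ (hxT i)).1

theorem posterior_variance_diverges_flat_prior_general
    (n : ℕ) (τ : ℝ) (hτ : 0 < τ) (i : Fin n)
    (g : Fin n → ℝ → ℝ)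
    (hg0 : ∀ j t, 0 < g j t)
    (a b : Fin n → ℝ)
    (ha : ∀ j, Tendsto (g j) atBot (𝓝 (a j)))
    (hb : ∀ j, Tendsto (g j) atTop (𝓝 (b j)))
    (hab : ∀ j, 0 < a j + b j) (hi : a i * b i = 0)
    (s : ℕ → ℝ) (hs : ∀ p, 0 < s p) (hsdiv : Tendsto s atTop atTop)
    (B : ℕ → Matrix (Fin n) (Fin n) ℝ)
    (hBc : ∀ x y, Tendsto (fun p => B p x y) atTop
      (𝓝 ((τ ^ 2 • (1 : Matrix (Fin n) (Fin n) ℝ)) x y))) :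
    Tendsto (fun p => ∫⁻ η : Fin n → ℝ,
        ENNReal.ofReal ((g i (η i))⁻¹ * (∏ j ∈ Finset.univ.erase i, g j (η j)) *
          gaussDensity (s p • B p) η))
      atTop (𝓝 (⊤ : ℝ≥0∞)) := by
  obtain ⟨σ, hσ, hratio⟩ :=
    exists_sign_eventually_le_inv_mul_prod i (hg0 i) ha hb (fun j _ => hab j) hi
  have hdet : 0 < (τ ^ 2 • (1 : Matrix (Fin n) (Fin n) ℝ)).det := by
    rw [det_smul, det_one, mul_one, Fintype.card_fin]
    positivity
  obtain ⟨κ, hκ, hgauss⟩ := exists_eventually_gaussDensity_smul_ge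
    (tendsto_pi_nhds.2 fun x => tendsto_pi_nhds.2 (hBc x)) hdet 2
  rw [ENNReal.tendsto_nhds_top_iff_nat]
  intro N
  obtain ⟨T, hT⟩ := eventually_atTop.1 (hratio ((N + 1) / κ))
  filter_upwards [hgauss, (Real.tendsto_sqrt_atTop.comp hsdiv).eventually_ge_atTop T]
    with p hpκ hpT
  have hr : 0 < √(s p) := Real.sqrt_pos.2 (hs p)
  refine lt_of_lt_of_le ?_ (ofReal_le_lintegral_of_le_on_box hσ hr (N + 1) fun η hη => ?_)
  · simp
  · have hlik := hT _ hpT η fun j => (hη j).1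
    have hprior := hpκ (s p) (hs p) η fun j => (hη j).2
    rw [Fintype.card_fin]
    calc ((N : ℝ) + 1) / √(s p) ^ n = (N + 1) / κ * (κ / √(s p) ^ n) := by field_simp
      _ ≤ _ := mul_le_mul hlik hprior (by positivity) ((by positivity : (0 : ℝ) ≤ _).trans hlik)

/-- **Divergence of the classical posterior estimator, Theorem 5(b).** For strictly
positive bounded likelihood contributions `gⱼ` with limits `aⱼ`, `bⱼ` at `∓∞`
satisfying `aⱼ + bⱼ > 0` and `aᵢbᵢ = 0`, diverging scales `sₚ → ∞` and `Bₚ → τ²Iₙ`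
entrywise, the integral `∫ gᵢ(ηᵢ)⁻¹ ∏_{j≠i} gⱼ(ηⱼ) φ_{sₚBₚ}(η) dη` diverges. -/
theorem posterior_variance_diverges_flat_prior
    (n : ℕ) (hn : 1 ≤ n) (τ : ℝ) (hτ : 0 < τ) (i : Fin n)
    (g : Fin n → ℝ → ℝ)
    (hgm : ∀ j, Measurable (g j)) (hg0 : ∀ j t, 0 < g j t)
    (hgb : ∀ j, ∃ B, ∀ t, g j t ≤ B)
    (a b : Fin n → ℝ) (ha0 : ∀ j, 0 ≤ a j) (hb0 : ∀ j, 0 ≤ b j)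
    (ha : ∀ j, Tendsto (g j) atBot (𝓝 (a j)))
    (hb : ∀ j, Tendsto (g j) atTop (𝓝 (b j)))
    (hab : ∀ j, 0 < a j + b j) (hi : a i * b i = 0)
    (s : ℕ → ℝ) (hs : ∀ p, 0 < s p) (hsdiv : Tendsto s atTop atTop)
    (B : ℕ → Matrix (Fin n) (Fin n) ℝ) (hB : ∀ p, (B p).PosDef)
    (hBc : ∀ x y, Tendsto (fun p => B p x y) atTop
      (𝓝 ((τ ^ 2 • (1 : Matrix (Fin n) (Fin n) ℝ)) x y))) :
    Tendsto (fun p => ∫⁻ η : Fin n → ℝ,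
        ENNReal.ofReal ((g i (η i))⁻¹ * (∏ j ∈ Finset.univ.erase i, g j (η j)) *
          gaussDensity (s p • B p) η))
      atTop (𝓝 (⊤ : ℝ≥0∞)) :=
  posterior_variance_diverges_flat_prior_general n τ hτ i g hg0 a b ha hb hab hi s hs hsdiv B hBc
end
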